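/- arXiv:math/0106010 — 4 statements merged into one kernel-verified Lean document; each statement's English description precedes it below -/
import Mathlib

section
/- For a finite-dimensional weak Hopf algebra H with dual pair of non-degenerate left integrals ℓ, λ, the element (ℓ₂⇀λ)⊗S⁻¹(ℓ₁) ∈ H*⊗H is a dual bases tensor: for every linear map T: H → H, Tr(T) = ⟨λ, T(S⁻¹(ℓ₁))ℓ₂⟩. -/
open TensorProduct

/-- A weak Hopf algebra over a field `k` (Böhm–Nill–Szlachányi):
an algebra and coalgebra with multiplicative comultiplication, the weak
unit/counit axioms, and an antipode. -/
structure WeakHopf (k H : Type*) [Field k] [Ring H] [Algebra k H] where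
  comul : H →ₗ[k] H ⊗[k] H
  counit : H →ₗ[k] k
  antipode : H →ₗ[k] H
  coassoc : ∀ h : H,
    (TensorProduct.assoc k H H H) ((TensorProduct.map comul LinearMap.id) (comul h)) =
      (TensorProduct.map LinearMap.id comul) (comul h)
  counit_comul : ∀ h : H,
    (TensorProduct.lid k H) ((TensorProduct.map counit LinearMap.id) (comul h)) = h
  comul_counit : ∀ h : H,
    (TensorProduct.rid k H) ((TensorProduct.map LinearMap.id counit) (comul h)) = h
  comul_mul : ∀ a b : H, comul (a * b) = comul a * comul b
  -- (Δ⊗id)Δ(1) = (Δ(1)⊗1)(1⊗Δ(1)) = (1⊗Δ(1))(Δ(1)⊗1)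
  weak_unit_left :
    (TensorProduct.map comul LinearMap.id) (comul 1) =
      (comul 1 ⊗ₜ[k] (1 : H)) *
        ((TensorProduct.assoc k H H H).symm ((1 : H) ⊗ₜ[k] comul 1))
  weak_unit_right :
    (TensorProduct.map comul LinearMap.id) (comul 1) =
      ((TensorProduct.assoc k H H H).symm ((1 : H) ⊗ₜ[k] comul 1)) *
        (comul 1 ⊗ₜ[k] (1 : H))
  -- ε(fgh) = ε(fg₁)ε(g₂h) = ε(fg₂)ε(g₁h)
  weak_counit_left : ∀ f g h : H,
    counit (f * g * h) =
      (TensorProduct.lid k k)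
        ((TensorProduct.map (counit ∘ₗ LinearMap.mulLeft k f)
          (counit ∘ₗ LinearMap.mulRight k h)) (comul g))
  weak_counit_right : ∀ f g h : H,
    counit (f * g * h) =
      (TensorProduct.lid k k)
        ((TensorProduct.map (counit ∘ₗ LinearMap.mulLeft k f)
          (counit ∘ₗ LinearMap.mulRight k h)) ((TensorProduct.comm k H H) (comul g)))
  -- h₁S(h₂) = ε(1₁h)1₂  (target counital map)
  antipode_right : ∀ h : H,
    (LinearMap.mul' k H) ((TensorProduct.map LinearMap.id antipode) (comul h)) =
      (TensorProduct.lid k H)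
        ((TensorProduct.map (counit ∘ₗ LinearMap.mulRight k h) LinearMap.id) (comul 1))
  -- S(h₁)h₂ = 1₁ε(h1₂)  (source counital map)
  antipode_left : ∀ h : H,
    (LinearMap.mul' k H) ((TensorProduct.map antipode LinearMap.id) (comul h)) =
      (TensorProduct.rid k H)
        ((TensorProduct.map LinearMap.id (counit ∘ₗ LinearMap.mulLeft k h)) (comul 1))
  -- S(h₁)h₂S(h₃) = S(h)
  antipode_mid : ∀ h : H,
    (LinearMap.mul' k H)
      ((TensorProduct.map (LinearMap.mul' k H ∘ₗ TensorProduct.map antipode LinearMap.id)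
        antipode) ((TensorProduct.map comul LinearMap.id) (comul h))) = antipode h

namespace WeakHopf

variable {k H : Type*} [Field k] [Ring H] [Algebra k H] (W : WeakHopf k H)

/-- The target counital map ε_t(h) = ε(1₁h)1₂, as a linear map. -/
noncomputable def εtL : H →ₗ[k] H :=
  (TensorProduct.lid k H).toLinearMap
    ∘ₗ TensorProduct.map
        (W.counit ∘ₗ LinearMap.mul' k H ∘ₗ (TensorProduct.comm k H H).toLinearMap)
        LinearMap.id
    ∘ₗ (TensorProduct.assoc k H H H).symm.toLinearMap
    ∘ₗ (TensorProduct.mk k H (H ⊗[k] H)).flip (W.comul 1)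

/-- The source counital map ε_s(h) = 1₁ε(h1₂), as a linear map. -/
noncomputable def εsL : H →ₗ[k] H :=
  (TensorProduct.rid k H).toLinearMap
    ∘ₗ TensorProduct.map LinearMap.id
        (W.counit ∘ₗ LinearMap.mul' k H ∘ₗ (TensorProduct.comm k H H).toLinearMap)
    ∘ₗ (TensorProduct.assoc k H H H).toLinearMap
    ∘ₗ (TensorProduct.mk k (H ⊗[k] H) H) (W.comul 1)

/-- The minimal weak Hopf subalgebra H_min = H_t H_s (as a subspace). -/
noncomputable def Hmin : Submodule k H :=
  Submodule.span k
    {x : H | ∃ z ∈ Set.range ⇑W.εtL, ∃ y ∈ Set.range ⇑W.εsL, x = z * y}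

/-- g ∈ H is group-like: invertible and Δ(g) = (g⊗g)Δ(1) = Δ(1)(g⊗g). -/
def IsGroupLike (g : H) : Prop :=
  IsUnit g ∧ W.comul g = (g ⊗ₜ[k] g) * W.comul 1 ∧
    W.comul g = W.comul 1 * (g ⊗ₜ[k] g)

/-- The convolution product on H* = (H →ₗ[k] k): ⟨φψ, h⟩ = ⟨φ, h₁⟩⟨ψ, h₂⟩. -/
noncomputable def dualMul (φ ψ : H →ₗ[k] k) : H →ₗ[k] k :=
  (TensorProduct.lid k k).toLinearMap ∘ₗ TensorProduct.map φ ψ ∘ₗ W.comul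

/-- γ ∈ H* is group-like: invertible in H* and
⟨γ,hg⟩ = ⟨γ,h1₁⟩⟨γ,S(1₂)g⟩ = ⟨γ,hS(1₁)⟩⟨γ,1₂g⟩ for all h,g. -/
noncomputable def IsGroupLikeDual (γ : H →ₗ[k] k) : Prop :=
  (∃ β : H →ₗ[k] k, W.dualMul γ β = W.counit ∧ W.dualMul β γ = W.counit) ∧
  (∀ h g : H, γ (h * g) =
    (TensorProduct.lid k k)
      ((TensorProduct.map (γ ∘ₗ LinearMap.mulLeft k h)
        (γ ∘ₗ LinearMap.mulRight k g ∘ₗ W.antipode)) (W.comul 1))) ∧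
  (∀ h g : H, γ (h * g) =
    (TensorProduct.lid k k)
      ((TensorProduct.map (γ ∘ₗ LinearMap.mulLeft k h ∘ₗ W.antipode)
        (γ ∘ₗ LinearMap.mulRight k g)) (W.comul 1)))

/-- x is a left integral in H: hx = ε_t(h)x for all h. -/
def IsLeftIntegral (x : H) : Prop := ∀ h : H, h * x = W.εtL h * x

/-- The space of left integrals in H. -/
noncomputable def leftIntegrals : Submodule k H where
  carrier := {x : H | ∀ h : H, h * x = W.εtL h * x}
  add_mem' := fun ha hb h => by rw [mul_add, ha h, hb h, mul_add]
  zero_mem' := fun h => by rw [mul_zero, mul_zero]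
  smul_mem' := fun c x hx h => by rw [mul_smul_comm, hx h, mul_smul_comm]

/-- λ ∈ H* is a left integral in H*: equivalently h₁λ(h₂) = ε_s(h₁)λ(h₂). -/
noncomputable def IsLeftIntegralDual (lam : H →ₗ[k] k) : Prop :=
  ∀ h : H,
    (TensorProduct.rid k H) ((TensorProduct.map LinearMap.id lam) (W.comul h)) =
      (TensorProduct.rid k H) ((TensorProduct.map W.εsL lam) (W.comul h))

/-- The action y·h := ⟨γ, yh1₁⟩S(1₂) of H on H_s associated to γ ∈ H*. -/
noncomputable def act (γ : H →ₗ[k] k) (y h : H) : H :=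
  (TensorProduct.lid k H)
    ((TensorProduct.map (γ ∘ₗ LinearMap.mulLeft k (y * h)) W.antipode) (W.comul 1))

/-- ε_t^g(ψ) ∈ H*, given by ⟨ε_t^g(ψ), x⟩ = ε(S(x)g₁)ψ(g₂). -/
noncomputable def etg (g : H) (ψ : H →ₗ[k] k) : H →ₗ[k] k :=
  (TensorProduct.lid k k).toLinearMap
    ∘ₗ TensorProduct.map (W.counit ∘ₗ LinearMap.mul' k H) ψ
    ∘ₗ (TensorProduct.assoc k H H H).symm.toLinearMap
    ∘ₗ (TensorProduct.mk k H (H ⊗[k] H)).flip (W.comul g)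
    ∘ₗ W.antipode

/-- L_g = {φ ∈ H* : ψφ = ε_t^g(ψ)φ for all ψ}. -/
noncomputable def Lset (g : H) : Set (H →ₗ[k] k) :=
  {φ | ∀ ψ : H →ₗ[k] k, W.dualMul ψ φ = W.dualMul (W.etg g ψ) φ}

end WeakHopf

/-! For a left integral `ℓ` one has `(1 ⊗ x) Δ(ℓ) = (S(x) ⊗ 1) Δ(ℓ)`. Both sides equal
`G(Δx) Δ(ℓ)` for `G(a ⊗ b) = (S(a) ⊗ 1) Δ(b)`: the left one because
`G(Δx) = ε_s(x₁) ⊗ x₂ = (1 ⊗ x) Δ(1)`, the right one because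
`Δ(b) Δ(ℓ) = Δ(ε_t(b) ℓ) = (ε_t(b) ⊗ 1) Δ(ℓ)` and `S(x₁) ε_t(x₂) = S(x)`.
Applying `id ⊗ λ` and `λ(ℓ₂) ℓ₁ = 1` gives `S⁻¹(ℓ₁) λ(y ℓ₂) = y`: the tensor
`(ℓ₂ ⇀ λ) ⊗ S⁻¹(ℓ₁) ∈ H* ⊗ H` represents the identity of `H`, so the trace of `T` is the
contraction of `(ℓ₂ ⇀ λ) ⊗ T(S⁻¹(ℓ₁))`. -/

theorem LinearMap.trace_eq_contractLeft_lTensor {R M : Type*} [CommRing R] [AddCommGroup M]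
    [Module R M] [Module.Free R M] [Module.Finite R M] (u : Module.Dual R M ⊗[R] M)
    (hu : dualTensorHom R M M u = LinearMap.id) (T : M →ₗ[R] M) :
    trace R M T = contractLeft R M (T.lTensor _ u) := by
  rw [← trace_eq_contract_apply, ← comp_apply (dualTensorHom R M M), dualTensorHom_comp_lTensor,
    comp_apply, hu]
  rfl

namespace TensorProduct

open LinearMap

variable {k A : Type*} [Field k] [Ring A] [Algebra k A] (φ : Module.Dual k A)

theorem rid_map_tmul_one_mul (a : A) (t : A ⊗[k] A) :
    TensorProduct.rid k A (map id φ (a ⊗ₜ 1 * t)) = a * TensorProduct.rid k A (map id φ t) := by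
  induction t using TensorProduct.induction_on with
  | zero => simp
  | tmul p q => simp
  | add s t hs ht => simp only [mul_add, map_add, hs, ht]

theorem dualTensorHom_map_comm_apply (f : A →ₗ[k] A) (t : A ⊗[k] A) (y : A) :
    dualTensorHom k A A (map ((mul k A).compr₂ φ).flip f (TensorProduct.comm k A A t)) y =
      f (TensorProduct.rid k A (map id φ ((1 : A) ⊗ₜ y * t))) := by
  induction t using TensorProduct.induction_on with
  | zero => simp
  | tmul p q => simp
  | add s t hs ht => simp only [mul_add, map_add, LinearMap.add_apply, hs, ht]

theorem contractLeft_lTensor_map_comm (f T : A →ₗ[k] A) (t : A ⊗[k] A) :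
    contractLeft k A (T.lTensor _ (map ((mul k A).compr₂ φ).flip f (TensorProduct.comm k A A t))) =
      φ (mul' k A (map (T ∘ₗ f) id t)) := by
  induction t using TensorProduct.induction_on with
  | zero => simp
  | tmul p q => simp
  | add s t hs ht => simp only [map_add, hs, ht]

theorem lid_map_assoc_tmul_one_mul (c : A →ₗ[k] k) (u v : A ⊗[k] A) :
    TensorProduct.lid k (A ⊗[k] A) (map c id
        (TensorProduct.assoc k A A A (v ⊗ₜ 1 * (TensorProduct.assoc k A A A).symm (1 ⊗ₜ u)))) =
      TensorProduct.lid k A (map c id v) ⊗ₜ 1 * u := by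
  induction u using TensorProduct.induction_on with
  | zero => simp
  | add u₁ u₂ h₁ h₂ => simp only [tmul_add, map_add, mul_add, h₁, h₂]
  | tmul p' q' =>
    induction v using TensorProduct.induction_on with
    | zero => simp
    | add v₁ v₂ h₁ h₂ => simp only [add_tmul, add_mul, map_add, h₁, h₂]
    | tmul p q => simp [smul_tmul']

end TensorProduct

namespace WeakHopf

open TensorProduct LinearMap

variable {k H : Type*} [Field k] [Ring H] [Algebra k H] (W : WeakHopf k H)

theorem εtL_apply (x : H) : W.εtL x = mul' k H (map id W.antipode (W.comul x)) := by
  rw [W.antipode_right]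
  simp only [εtL, coe_comp, LinearEquiv.coe_coe, Function.comp_apply, flip_apply, mk_apply]
  induction W.comul 1 using TensorProduct.induction_on with
  | zero => simp
  | tmul a b => simp
  | add u v hu hv => simp only [tmul_add, map_add, hu, hv]

theorem εtL_eq_comp : W.εtL = mul' k H ∘ₗ map id W.antipode ∘ₗ W.comul := by
  ext x; exact W.εtL_apply x

theorem εsL_apply (x : H) : W.εsL x = mul' k H (map W.antipode id (W.comul x)) := by
  rw [W.antipode_left]
  simp only [εsL, coe_comp, LinearEquiv.coe_coe, Function.comp_apply, mk_apply]
  induction W.comul 1 using TensorProduct.induction_on with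
  | zero => simp
  | tmul a b => simp
  | add u v hu hv => simp only [add_tmul, map_add, hu, hv]

theorem comul_one_mul (x : H) : W.comul 1 * W.comul x = W.comul x := by
  rw [← W.comul_mul, one_mul]

theorem comul_mul_comul_one (x : H) : W.comul x * W.comul 1 = W.comul x := by
  rw [← W.comul_mul, mul_one]

-- `z ↦ v₁ ε(z v₂)`: `ε_s` with `Δ(1)` replaced by an arbitrary `v`, so that one can induct on `v`.
noncomputable def sourceMapOf (v : H ⊗[k] H) : H →ₗ[k] H :=
  (TensorProduct.rid k H).toLinearMap ∘ₗ map id W.counit ∘ₗ (mul k (H ⊗[k] H)).flip v ∘ₗ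
    (Algebra.TensorProduct.includeRight : H →ₐ[k] H ⊗[k] H).toLinearMap

theorem sourceMapOf_tmul (p q z : H) : W.sourceMapOf (p ⊗ₜ q) z = W.counit (z * q) • p := by
  simp [sourceMapOf]

theorem sourceMapOf_add (v w : H ⊗[k] H) :
    W.sourceMapOf (v + w) = W.sourceMapOf v + W.sourceMapOf w := by
  simp only [sourceMapOf, map_add, add_comp, comp_add]

theorem sourceMapOf_comul_one : W.sourceMapOf (W.comul 1) = W.εsL := by
  ext z
  simp only [sourceMapOf, εsL, coe_comp, LinearEquiv.coe_coe, Function.comp_apply, mk_apply,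
    flip_apply, mul_apply', AlgHom.toLinearMap_apply, Algebra.TensorProduct.includeRight_apply]
  induction W.comul 1 using TensorProduct.induction_on with
  | zero => simp
  | tmul a b => simp
  | add u v hu hv => simp only [add_tmul, mul_add, map_add, hu, hv]

-- For `D = Δx` and `u = v = Δ(1)` this is `1₁ ⊗ ε(x₁1₂) x₂1₃ = ε_s(x₁1'₁) ⊗ x₂1'₂`, where
-- `weak_unit_right` has expanded `1₁ ⊗ 1₂ ⊗ 1₃` as `1₁ ⊗ 1'₁1₂ ⊗ 1'₂`.
theorem map_counit_mulLeft_assoc (D u v : H ⊗[k] H) :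
    map id ((TensorProduct.lid k H).toLinearMap ∘ₗ map W.counit id ∘ₗ mulLeft k D)
      (TensorProduct.assoc k H H H ((TensorProduct.assoc k H H H).symm (1 ⊗ₜ u) * (v ⊗ₜ 1))) =
      map (W.sourceMapOf v) id (D * u) := by
  induction u using TensorProduct.induction_on with
  | zero => simp
  | add u₁ u₂ h₁ h₂ => simp only [tmul_add, map_add, add_mul, mul_add, h₁, h₂]
  | tmul p' q' =>
    induction v using TensorProduct.induction_on with
    | zero => simp [sourceMapOf]
    | add v₁ v₂ h₁ h₂ =>
      simp only [add_tmul, mul_add, map_add, h₁, h₂, sourceMapOf_add, map_add_left,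
        LinearMap.add_apply]
    | tmul p q =>
      induction D using TensorProduct.induction_on with
      | zero => simp
      | add D₁ D₂ h₁ h₂ =>
        have hD : mulLeft k (D₁ + D₂) = mulLeft k D₁ + mulLeft k D₂ := by ext; simp [add_mul]
        simp only [hD, add_mul, comp_add, map_add_right, LinearMap.add_apply, h₁, h₂, map_add]
      | tmul d₁ d₂ =>
        simp [sourceMapOf_tmul, smul_tmul', mul_assoc]

theorem one_tmul_mul_comul_one (x : H) :
    (1 : H) ⊗ₜ[k] x * W.comul 1 = map W.εsL id (W.comul x) := by
  have hx : mulLeft k x =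
      ((TensorProduct.lid k H).toLinearMap ∘ₗ map W.counit id ∘ₗ mulLeft k (W.comul x)) ∘ₗ
        W.comul := by
    ext z
    simpa [W.comul_mul] using (W.counit_comul (x * z)).symm
  calc (1 : H) ⊗ₜ[k] x * W.comul 1 = map id (mulLeft k x) (W.comul 1) := by
        induction W.comul 1 using TensorProduct.induction_on with
        | zero => simp
        | tmul a b => simp
        | add u v hu hv => rw [mul_add, hu, hv, map_add]
    _ = map (W.sourceMapOf (W.comul 1)) id (W.comul x * W.comul 1) := by
        rw [← map_counit_mulLeft_assoc, ← W.weak_unit_right, W.coassoc, hx, map_map, comp_id]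
    _ = map W.εsL id (W.comul x) := by rw [sourceMapOf_comul_one, comul_mul_comul_one]

theorem comul_lid_map (c : H →ₗ[k] k) (u : H ⊗[k] H) :
    W.comul (TensorProduct.lid k H (map c id u)) =
      TensorProduct.lid k (H ⊗[k] H) (map c id (map id W.comul u)) := by
  induction u using TensorProduct.induction_on with
  | zero => simp
  | tmul p q => simp
  | add u v hu hv => simp only [map_add, hu, hv]

theorem comul_εtL (z : H) : W.comul (W.εtL z) = W.εtL z ⊗ₜ 1 * W.comul 1 := by
  rw [W.εtL_apply, W.antipode_right, comul_lid_map, ← W.coassoc, W.weak_unit_left]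
  exact lid_map_assoc_tmul_one_mul _ _ _

theorem antipode_mul_εtL (x : H) : mul' k H (map W.antipode W.εtL (W.comul x)) = W.antipode x := by
  have hassoc : mul' k H ∘ₗ map W.antipode (mul' k H ∘ₗ map id W.antipode) ∘ₗ
        (TensorProduct.assoc k H H H).toLinearMap =
      mul' k H ∘ₗ map (mul' k H ∘ₗ map W.antipode id) W.antipode := by
    ext a b c
    simp [mul_assoc]
  calc mul' k H (map W.antipode W.εtL (W.comul x))
      = mul' k H (map W.antipode (mul' k H ∘ₗ map id W.antipode) (map id W.comul (W.comul x))) := by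
        rw [map_map, comp_id, εtL_eq_comp]; rfl
    _ = mul' k H (map (mul' k H ∘ₗ map W.antipode id) W.antipode (map W.comul id (W.comul x))) := by
        rw [← W.coassoc]; exact LinearMap.congr_fun hassoc _
    _ = W.antipode x := W.antipode_mid x

noncomputable def antipodeMulComul : H ⊗[k] H →ₗ[k] H ⊗[k] H :=
  map (mul' k H ∘ₗ map W.antipode id) id ∘ₗ (TensorProduct.assoc k H H H).symm.toLinearMap ∘ₗ
    map id W.comul

theorem antipodeMulComul_tmul (a b : H) :
    W.antipodeMulComul (a ⊗ₜ b) = W.antipode a ⊗ₜ 1 * W.comul b := by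
  simp only [antipodeMulComul, coe_comp, LinearEquiv.coe_coe, Function.comp_apply, map_tmul,
    id_coe, id_eq]
  induction W.comul b using TensorProduct.induction_on with
  | zero => simp
  | tmul p q => simp
  | add u v hu hv => simp only [tmul_add, map_add, mul_add, hu, hv]

theorem antipodeMulComul_comul (x : H) :
    W.antipodeMulComul (W.comul x) = (1 : H) ⊗ₜ x * W.comul 1 := by
  rw [one_tmul_mul_comul_one, antipodeMulComul, comp_apply, comp_apply, ← W.coassoc,
    LinearEquiv.coe_coe, LinearEquiv.symm_apply_apply, map_map, comp_id]
  congr 2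
  ext z
  exact (W.εsL_apply z).symm

theorem antipodeMulComul_mul_comul_of_mem_leftIntegrals {ℓ : H} (hl : ℓ ∈ W.leftIntegrals)
    (u : H ⊗[k] H) :
    W.antipodeMulComul u * W.comul ℓ = mul' k H (map W.antipode W.εtL u) ⊗ₜ 1 * W.comul ℓ := by
  induction u using TensorProduct.induction_on with
  | zero => simp
  | add u v hu hv => simp only [map_add, add_mul, add_tmul, hu, hv]
  | tmul a b =>
    have hb : b * ℓ = W.εtL b * ℓ := hl b
    rw [antipodeMulComul_tmul, mul_assoc, ← W.comul_mul, hb, W.comul_mul, comul_εtL, mul_assoc,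
      comul_one_mul, ← mul_assoc, Algebra.TensorProduct.tmul_mul_tmul, one_mul, map_tmul,
      mul'_apply]

theorem one_tmul_mul_comul_of_mem_leftIntegrals {ℓ : H} (hl : ℓ ∈ W.leftIntegrals) (x : H) :
    (1 : H) ⊗ₜ x * W.comul ℓ = W.antipode x ⊗ₜ 1 * W.comul ℓ := by
  calc (1 : H) ⊗ₜ x * W.comul ℓ = (1 : H) ⊗ₜ x * W.comul 1 * W.comul ℓ := by
        rw [mul_assoc, comul_one_mul]
    _ = W.antipode x ⊗ₜ 1 * W.comul ℓ := by
        rw [← antipodeMulComul_comul, antipodeMulComul_mul_comul_of_mem_leftIntegrals W hl,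
          antipode_mul_εtL]

end WeakHopf

theorem weakHopf_dual_bases_trace_general {k H : Type*} [Field k] [Ring H] [Algebra k H]
    [FiniteDimensional k H] (W : WeakHopf k H) (ℓ : H) (lam : H →ₗ[k] k)
    (Sinv : H →ₗ[k] H)
    (hS1 : Sinv ∘ₗ W.antipode = LinearMap.id)
    (hl : ℓ ∈ W.leftIntegrals)
    (hdual1 : (TensorProduct.rid k H)
      ((TensorProduct.map LinearMap.id lam) (W.comul ℓ)) = 1) :
    ∀ T : H →ₗ[k] H,
      LinearMap.trace k H T =
        lam ((LinearMap.mul' k H)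
          ((TensorProduct.map (T ∘ₗ Sinv) LinearMap.id) (W.comul ℓ))) := by
  intro T
  -- `u` is the dual bases tensor `(ℓ₂ ⇀ λ) ⊗ S⁻¹(ℓ₁)`.
  set u := TensorProduct.map ((LinearMap.mul k H).compr₂ lam).flip Sinv
    (TensorProduct.comm k H H (W.comul ℓ))
  have hu : dualTensorHom k H H u = LinearMap.id := by
    ext y
    rw [TensorProduct.dualTensorHom_map_comm_apply, W.one_tmul_mul_comul_of_mem_leftIntegrals hl,
      TensorProduct.rid_map_tmul_one_mul, hdual1, mul_one, ← LinearMap.comp_apply, hS1]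
  rw [LinearMap.trace_eq_contractLeft_lTensor u hu, TensorProduct.contractLeft_lTensor_map_comm]

/-- The dual bases tensor identity: for every T : H → H,
Tr(T) = ⟨λ, T(S⁻¹(ℓ₁))ℓ₂⟩. -/
theorem weakHopf_dual_bases_trace {k H : Type*} [Field k] [Ring H] [Algebra k H]
    [FiniteDimensional k H] (W : WeakHopf k H) (ℓ : H) (lam : H →ₗ[k] k)
    (Sinv : H →ₗ[k] H)
    (hS1 : Sinv ∘ₗ W.antipode = LinearMap.id) (hS2 : W.antipode ∘ₗ Sinv = LinearMap.id)
    (hl : ℓ ∈ W.leftIntegrals) (hlam : W.IsLeftIntegralDual lam)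
    (hdual1 : (TensorProduct.rid k H)
      ((TensorProduct.map LinearMap.id lam) (W.comul ℓ)) = 1)
    (hdual2 : lam ∘ₗ LinearMap.mulRight k ℓ = W.counit) :
    ∀ T : H →ₗ[k] H,
      LinearMap.trace k H T =
        lam ((LinearMap.mul' k H)
          ((TensorProduct.map (T ∘ₗ Sinv) LinearMap.id) (W.comul ℓ))) :=
  weakHopf_dual_bases_trace_general W ℓ lam Sinv hS1 hl hdual1
end

section
/- In a weak Hopf algebra H, the element 𝓔 = 1₁S(1'₁) ⊗ S(1₂)1'₂ (where 1, 1' are two copies of Δ(1)) is a separability element for the minimal weak Hopf subalgebra H_min = H_tH_s: m(𝓔) = 1 and (a⊗1)𝓔 = 𝓔(1⊗a) for all a ∈ H_min. In particular H_min is a separable algebra. -/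
open TensorProduct

namespace WeakHopfSep
set_option maxHeartbeats 1000000
set_option synthInstance.maxHeartbeats 200000

open TensorProduct Finset

variable {k H : Type*} [Field k] [Ring H] [Algebra k H]

/-- multiply-after-map gadget: `(x ⊗ y) ↦ f x * g y`. -/
noncomputable def bi (f g : H →ₗ[k] H) : H ⊗[k] H →ₗ[k] H :=
  LinearMap.mul' k H ∘ₗ TensorProduct.map f g

@[simp] lemma bi_tmul (f g : H →ₗ[k] H) (x y : H) : bi f g (x ⊗ₜ y) = f x * g y := by
  simp [bi]

/-- scalar-functional gadget: `x ↦ (φ x) • 1`. -/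
noncomputable def ctr (φ : H →ₗ[k] k) : H →ₗ[k] H := Algebra.linearMap k H ∘ₗ φ

@[simp] lemma ctr_apply (φ : H →ₗ[k] k) (x : H) : ctr φ x = algebraMap k H (φ x) := rfl

lemma mul_ctr (φ : H →ₗ[k] k) (x y : H) : y * ctr φ x = φ x • y := by
  rw [ctr_apply, ← Algebra.commutes, ← Algebra.smul_def]

lemma ctr_mul (φ : H →ₗ[k] k) (x y : H) : ctr φ x * y = φ x • y := by
  rw [ctr_apply, ← Algebra.smul_def]

variable (W : WeakHopf k H) (T : H → Finset (H × H))

/-- `T` gives comultiplication representatives for `W.comul`. -/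
abbrev IsRep : Prop := ∀ x : H, W.comul x = ∑ p ∈ T x, p.1 ⊗ₜ[k] p.2

variable {W T}

section

/-- `ε_t x = ∑ ε(1₁ x) • 1₂`. -/
lemma εt_apply (hT : IsRep W T) (x : H) :
    W.εtL x = ∑ i ∈ T 1, W.counit (i.1 * x) • i.2 := by
  have h1 := hT 1
  simp only [WeakHopf.εtL, LinearMap.coe_comp, Function.comp_apply, LinearMap.flip_apply,
    TensorProduct.mk_apply, LinearEquiv.coe_coe, h1, tmul_sum, map_sum]
  simp [TensorProduct.assoc_symm_tmul, TensorProduct.map_tmul, TensorProduct.comm_tmul,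
    TensorProduct.lid_tmul, LinearMap.mul'_apply]

/-- `ε_s x = ∑ ε(x 1₂) • 1₁`. -/
lemma εs_apply (hT : IsRep W T) (x : H) :
    W.εsL x = ∑ i ∈ T 1, W.counit (x * i.2) • i.1 := by
  have h1 := hT 1
  simp only [WeakHopf.εsL, LinearMap.coe_comp, Function.comp_apply,
    TensorProduct.mk_apply, LinearEquiv.coe_coe, h1, sum_tmul, map_sum]
  simp [TensorProduct.assoc_tmul, TensorProduct.map_tmul, TensorProduct.comm_tmul,
    TensorProduct.rid_tmul, LinearMap.mul'_apply]

/-- weak counit axiom, left form, in sum form. -/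
lemma wcl (hT : IsRep W T) (f x h : H) :
    W.counit (f * x * h) = ∑ p ∈ T x, W.counit (f * p.1) * W.counit (p.2 * h) := by
  have := W.weak_counit_left f x h
  rw [hT x] at this
  simpa [TensorProduct.map_tmul, TensorProduct.lid_tmul, smul_eq_mul] using this

/-- weak counit axiom, right (twisted) form, in sum form. -/
lemma wcr (hT : IsRep W T) (f x h : H) :
    W.counit (f * x * h) = ∑ p ∈ T x, W.counit (f * p.2) * W.counit (p.1 * h) := by
  have := W.weak_counit_right f x h
  rw [hT x] at this
  simpa [TensorProduct.map_tmul, TensorProduct.comm_tmul, TensorProduct.lid_tmul,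
    smul_eq_mul] using this

lemma counit_lid (hT : IsRep W T) (x : H) :
    ∑ p ∈ T x, W.counit p.1 • p.2 = x := by
  have := W.counit_comul x
  rw [hT x] at this
  simpa [TensorProduct.map_tmul, TensorProduct.lid_tmul] using this

lemma counit_rid (hT : IsRep W T) (x : H) :
    ∑ p ∈ T x, W.counit p.2 • p.1 = x := by
  have := W.comul_counit x
  rw [hT x] at this
  simpa [TensorProduct.map_tmul, TensorProduct.rid_tmul] using this

/-- `ε_t x = ∑ x₁ S(x₂)` (antipode_right). -/
lemma εt_S (hT : IsRep W T) (x : H) :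
    ∑ p ∈ T x, p.1 * W.antipode p.2 = W.εtL x := by
  have := W.antipode_right x
  rw [hT x, hT 1] at this
  rw [εt_apply hT x]
  simpa [TensorProduct.map_tmul, TensorProduct.lid_tmul, LinearMap.mul'_apply] using this

/-- `ε_s x = ∑ S(x₁) x₂` (antipode_left). -/
lemma εs_S (hT : IsRep W T) (x : H) :
    ∑ p ∈ T x, W.antipode p.1 * p.2 = W.εsL x := by
  have := W.antipode_left x
  rw [hT x, hT 1] at this
  rw [εs_apply hT x]
  simpa [TensorProduct.map_tmul, TensorProduct.rid_tmul, LinearMap.mul'_apply] using this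

end

end WeakHopfSep

namespace WeakHopfSep

open TensorProduct Finset
set_option maxHeartbeats 1000000
set_option synthInstance.maxHeartbeats 400000

variable {k H : Type*} [Field k] [Ring H] [Algebra k H]
variable (W : WeakHopf k H) (T : H → Finset (H × H))

variable {W T}

section

/-- `ε_t` as `mul' ∘ (id ⊗ S) ∘ Δ`. -/
lemma εt_biS (hT : IsRep W T) (x : H) :
    W.εtL x = bi LinearMap.id W.antipode (W.comul x) := by
  rw [bi, LinearMap.comp_apply, W.antipode_right x, εt_apply hT x]
  rw [hT 1]
  simp [LinearMap.mul'_apply]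

lemma εs_biS (hT : IsRep W T) (x : H) :
    W.εsL x = bi W.antipode LinearMap.id (W.comul x) := by
  rw [bi, LinearMap.comp_apply, W.antipode_left x, εs_apply hT x]
  rw [hT 1]
  simp [LinearMap.mul'_apply]

lemma mulS_one (hT : IsRep W T) : ∑ i ∈ T 1, i.1 * W.antipode i.2 = 1 := by
  rw [εt_S hT 1, εt_apply hT 1]
  simpa using counit_lid hT 1

lemma Smul_one (hT : IsRep W T) : ∑ i ∈ T 1, W.antipode i.1 * i.2 = 1 := by
  rw [εs_S hT 1, εs_apply hT 1]
  simpa using counit_rid hT 1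

/-- `ε(f · ε_t x) = ε(f x)`. -/
lemma Ct (hT : IsRep W T) (f x : H) : W.counit (f * W.εtL x) = W.counit (f * x) := by
  rw [εt_apply hT x]
  rw [show f * ∑ i ∈ T 1, W.counit (i.1 * x) • i.2
      = ∑ i ∈ T 1, W.counit (i.1 * x) • (f * i.2) by
    rw [Finset.mul_sum]; exact Finset.sum_congr rfl fun i _ => (mul_smul_comm _ _ _)]
  rw [map_sum]
  have := wcr hT f 1 x
  rw [mul_one] at this
  rw [this]
  exact Finset.sum_congr rfl fun i _ => by rw [map_smul, smul_eq_mul, mul_comm]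

/-- `ε(ε_s x · h) = ε(x h)`. -/
lemma Cs (hT : IsRep W T) (x h : H) : W.counit (W.εsL x * h) = W.counit (x * h) := by
  rw [εs_apply hT x]
  rw [show (∑ i ∈ T 1, W.counit (x * i.2) • i.1) * h
      = ∑ i ∈ T 1, W.counit (x * i.2) • (i.1 * h) by
    rw [Finset.sum_mul]; exact Finset.sum_congr rfl fun i _ => (smul_mul_assoc _ _ _)]
  rw [map_sum]
  have := wcr hT x 1 h
  rw [mul_one] at this
  rw [this]
  exact Finset.sum_congr rfl fun i _ => by rw [map_smul, smul_eq_mul]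

lemma Ct2 (hT : IsRep W T) (x g : H) : W.εtL (x * W.εtL g) = W.εtL (x * g) := by
  rw [εt_apply hT (x * W.εtL g), εt_apply hT (x*g)]
  exact Finset.sum_congr rfl fun i _ => by
    rw [← mul_assoc, Ct hT (i.1 * x) g, mul_assoc]

lemma Cs2 (hT : IsRep W T) (f x : H) : W.εsL (W.εsL f * x) = W.εsL (f * x) := by
  rw [εs_apply hT (W.εsL f * x), εs_apply hT (f*x)]
  exact Finset.sum_congr rfl fun i _ => by
    rw [mul_assoc, Cs hT f (x * i.2), ← mul_assoc]

/-- ν-form: `ε_t(x g) = ∑ ε(x₂ g) • ε_t(x₁)`. -/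
lemma nu (hT : IsRep W T) (x g : H) :
    W.εtL (x * g) = ∑ p ∈ T x, W.counit (p.2 * g) • W.εtL p.1 := by
  rw [εt_apply hT (x*g)]
  have key : ∀ i : H × H, W.counit (i.1 * (x * g))
      = ∑ p ∈ T x, W.counit (i.1 * p.1) * W.counit (p.2 * g) := fun i => by
    rw [← mul_assoc]; exact wcl hT i.1 x g
  calc ∑ i ∈ T 1, W.counit (i.1 * (x*g)) • i.2
      = ∑ i ∈ T 1, ∑ p ∈ T x, (W.counit (i.1 * p.1) * W.counit (p.2 * g)) • i.2 := by
        exact Finset.sum_congr rfl fun i _ => by rw [key i, Finset.sum_smul]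
    _ = ∑ p ∈ T x, ∑ i ∈ T 1, (W.counit (i.1 * p.1) * W.counit (p.2 * g)) • i.2 :=
        Finset.sum_comm
    _ = ∑ p ∈ T x, W.counit (p.2 * g) • W.εtL p.1 := by
        refine Finset.sum_congr rfl fun p _ => ?_
        rw [εt_apply hT p.1, Finset.smul_sum]
        exact Finset.sum_congr rfl fun i _ => by rw [mul_comm, mul_smul]

/-- μ-form: `ε_t(x g) = ∑ ε(x₁ g) • ε_t(x₂)`. -/
lemma mu (hT : IsRep W T) (x g : H) :
    W.εtL (x * g) = ∑ p ∈ T x, W.counit (p.1 * g) • W.εtL p.2 := by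
  rw [εt_apply hT (x*g)]
  have key : ∀ i : H × H, W.counit (i.1 * (x * g))
      = ∑ p ∈ T x, W.counit (i.1 * p.2) * W.counit (p.1 * g) := fun i => by
    rw [← mul_assoc]; exact wcr hT i.1 x g
  calc ∑ i ∈ T 1, W.counit (i.1 * (x*g)) • i.2
      = ∑ i ∈ T 1, ∑ p ∈ T x, (W.counit (i.1 * p.2) * W.counit (p.1 * g)) • i.2 := by
        exact Finset.sum_congr rfl fun i _ => by rw [key i, Finset.sum_smul]
    _ = ∑ p ∈ T x, ∑ i ∈ T 1, (W.counit (i.1 * p.2) * W.counit (p.1 * g)) • i.2 :=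
        Finset.sum_comm
    _ = ∑ p ∈ T x, W.counit (p.1 * g) • W.εtL p.2 := by
        refine Finset.sum_congr rfl fun p _ => ?_
        rw [εt_apply hT p.2, Finset.smul_sum]
        exact Finset.sum_congr rfl fun i _ => by rw [mul_comm, mul_smul]

/-- ν'-form: `ε_s(f x) = ∑ ε(f x₂) • ε_s(x₁)`. -/
lemma nu' (hT : IsRep W T) (f x : H) :
    W.εsL (f * x) = ∑ p ∈ T x, W.counit (f * p.2) • W.εsL p.1 := by
  rw [εs_apply hT (f*x)]
  have key : ∀ i : H × H, W.counit (f * x * i.2)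
      = ∑ p ∈ T x, W.counit (f * p.2) * W.counit (p.1 * i.2) := fun i =>
    wcr hT f x i.2
  calc ∑ i ∈ T 1, W.counit (f * x * i.2) • i.1
      = ∑ i ∈ T 1, ∑ p ∈ T x, (W.counit (f * p.2) * W.counit (p.1 * i.2)) • i.1 := by
        refine Finset.sum_congr rfl fun i _ => ?_
        rw [show f * x * i.2 = f * x * i.2 from rfl, key i, Finset.sum_smul]
    _ = ∑ p ∈ T x, ∑ i ∈ T 1, (W.counit (f * p.2) * W.counit (p.1 * i.2)) • i.1 :=
        Finset.sum_comm
    _ = ∑ p ∈ T x, W.counit (f * p.2) • W.εsL p.1 := by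
        refine Finset.sum_congr rfl fun p _ => ?_
        rw [εs_apply hT p.1, Finset.smul_sum]
        exact Finset.sum_congr rfl fun i _ => by rw [mul_smul]

/-- μ'-form: `ε_s(f x) = ∑ ε(f x₁) • ε_s(x₂)`. -/
lemma mu' (hT : IsRep W T) (f x : H) :
    W.εsL (f * x) = ∑ p ∈ T x, W.counit (f * p.1) • W.εsL p.2 := by
  rw [εs_apply hT (f*x)]
  have key : ∀ i : H × H, W.counit (f * x * i.2)
      = ∑ p ∈ T x, W.counit (f * p.1) * W.counit (p.2 * i.2) := fun i =>
    wcl hT f x i.2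
  calc ∑ i ∈ T 1, W.counit (f * x * i.2) • i.1
      = ∑ i ∈ T 1, ∑ p ∈ T x, (W.counit (f * p.1) * W.counit (p.2 * i.2)) • i.1 := by
        refine Finset.sum_congr rfl fun i _ => ?_
        rw [key i, Finset.sum_smul]
    _ = ∑ p ∈ T x, ∑ i ∈ T 1, (W.counit (f * p.1) * W.counit (p.2 * i.2)) • i.1 :=
        Finset.sum_comm
    _ = ∑ p ∈ T x, W.counit (f * p.1) • W.εsL p.2 := by
        refine Finset.sum_congr rfl fun p _ => ?_
        rw [εs_apply hT p.2, Finset.smul_sum]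
        exact Finset.sum_congr rfl fun i _ => by rw [mul_smul]

end

end WeakHopfSep

namespace WeakHopfSep

open TensorProduct Finset
set_option maxHeartbeats 1000000
set_option synthInstance.maxHeartbeats 400000

variable {k H : Type*} [Field k] [Ring H] [Algebra k H]
variable {W : WeakHopf k H} {T : H → Finset (H × H)}

section

/-- `(x ⊗ y) ↦ ε(y) • x`. -/
noncomputable def coR (W : WeakHopf k H) : H ⊗[k] H →ₗ[k] H :=
  (TensorProduct.rid k H).toLinearMap ∘ₗ TensorProduct.map LinearMap.id W.counit

@[simp] lemma coR_tmul (x y : H) : coR W (x ⊗ₜ y) = W.counit y • x := by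
  simp [coR]

/-- `((x ⊗ y) ⊗ z) ↦ ε(y) • (x ⊗ z)`. -/
noncomputable def sc2 (W : WeakHopf k H) : (H ⊗[k] H) ⊗[k] H →ₗ[k] H ⊗[k] H :=
  (TensorProduct.map LinearMap.id (TensorProduct.lid k H).toLinearMap)
    ∘ₗ (TensorProduct.assoc k H k H).toLinearMap
    ∘ₗ (TensorProduct.map (TensorProduct.map LinearMap.id W.counit) LinearMap.id)

@[simp] lemma sc2_tmul (x y z : H) :
    sc2 W ((x ⊗ₜ y) ⊗ₜ z) = W.counit y • (x ⊗ₜ z) := by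
  simp [sc2, tmul_smul, smul_tmul']

/-- weak unit (left) in sum form. -/
lemma wul (hT : IsRep W T) :
    ∑ i ∈ T 1, ∑ p ∈ T i.1, (p.1 ⊗ₜ[k] p.2) ⊗ₜ[k] i.2
      = ∑ i ∈ T 1, ∑ j ∈ T 1, (i.1 ⊗ₜ[k] (i.2 * j.1)) ⊗ₜ[k] j.2 := by
  have e1 : (TensorProduct.map W.comul LinearMap.id) (W.comul 1)
      = ∑ i ∈ T 1, ∑ p ∈ T i.1, (p.1 ⊗ₜ[k] p.2) ⊗ₜ[k] i.2 := by
    rw [hT 1, map_sum]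
    refine Finset.sum_congr rfl fun i _ => ?_
    rw [TensorProduct.map_tmul, hT i.1, sum_tmul]
    simp
  have e2 : (W.comul 1 ⊗ₜ[k] (1:H)) *
        ((TensorProduct.assoc k H H H).symm ((1:H) ⊗ₜ[k] W.comul 1))
      = ∑ i ∈ T 1, ∑ j ∈ T 1, (i.1 ⊗ₜ[k] (i.2 * j.1)) ⊗ₜ[k] j.2 := by
    rw [hT 1, sum_tmul, tmul_sum, map_sum, Finset.sum_mul_sum]
    refine Finset.sum_congr rfl fun i _ => Finset.sum_congr rfl fun j _ => ?_
    rw [TensorProduct.assoc_symm_tmul, Algebra.TensorProduct.tmul_mul_tmul,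
      Algebra.TensorProduct.tmul_mul_tmul, mul_one, one_mul]
  rw [← e1, ← e2, W.weak_unit_left]

/-- weak unit (right) in sum form. -/
lemma wur (hT : IsRep W T) :
    ∑ i ∈ T 1, ∑ p ∈ T i.1, (p.1 ⊗ₜ[k] p.2) ⊗ₜ[k] i.2
      = ∑ i ∈ T 1, ∑ j ∈ T 1, (j.1 ⊗ₜ[k] (i.1 * j.2)) ⊗ₜ[k] i.2 := by
  have e1 : (TensorProduct.map W.comul LinearMap.id) (W.comul 1)
      = ∑ i ∈ T 1, ∑ p ∈ T i.1, (p.1 ⊗ₜ[k] p.2) ⊗ₜ[k] i.2 := by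
    rw [hT 1, map_sum]
    refine Finset.sum_congr rfl fun i _ => ?_
    rw [TensorProduct.map_tmul, hT i.1, sum_tmul]
    simp
  have e2 : ((TensorProduct.assoc k H H H).symm ((1:H) ⊗ₜ[k] W.comul 1)) *
        (W.comul 1 ⊗ₜ[k] (1:H))
      = ∑ i ∈ T 1, ∑ j ∈ T 1, (j.1 ⊗ₜ[k] (i.1 * j.2)) ⊗ₜ[k] i.2 := by
    rw [hT 1, sum_tmul, tmul_sum, map_sum, Finset.sum_mul_sum]
    refine Finset.sum_congr rfl fun i _ => Finset.sum_congr rfl fun j _ => ?_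
    rw [TensorProduct.assoc_symm_tmul, Algebra.TensorProduct.tmul_mul_tmul,
      Algebra.TensorProduct.tmul_mul_tmul, mul_one, one_mul]
  rw [← e1, ← e2, W.weak_unit_right]

/-- coassociativity at `1` in sum form (second home). -/
lemma coassocD (hT : IsRep W T) :
    ∑ i ∈ T 1, ∑ p ∈ T i.1, p.1 ⊗ₜ[k] (p.2 ⊗ₜ[k] i.2)
      = ∑ i ∈ T 1, ∑ q ∈ T i.2, i.1 ⊗ₜ[k] (q.1 ⊗ₜ[k] q.2) := by
  have e1 : (TensorProduct.assoc k H H H)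
        ((TensorProduct.map W.comul LinearMap.id) (W.comul 1))
      = ∑ i ∈ T 1, ∑ p ∈ T i.1, p.1 ⊗ₜ[k] (p.2 ⊗ₜ[k] i.2) := by
    rw [hT 1, map_sum, map_sum]
    refine Finset.sum_congr rfl fun i _ => ?_
    rw [TensorProduct.map_tmul, hT i.1, sum_tmul, map_sum]
    simp
  have e2 : (TensorProduct.map LinearMap.id W.comul) (W.comul 1)
      = ∑ i ∈ T 1, ∑ q ∈ T i.2, i.1 ⊗ₜ[k] (q.1 ⊗ₜ[k] q.2) := by
    rw [hT 1, map_sum]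
    refine Finset.sum_congr rfl fun i _ => ?_
    rw [TensorProduct.map_tmul, hT i.2, tmul_sum]
    simp
  rw [← e1, ← e2, W.coassoc 1]

/-- home-2 version of `wul`. -/
lemma wul2 (hT : IsRep W T) :
    ∑ i ∈ T 1, ∑ p ∈ T i.1, p.1 ⊗ₜ[k] (p.2 ⊗ₜ[k] i.2)
      = ∑ i ∈ T 1, ∑ j ∈ T 1, i.1 ⊗ₜ[k] ((i.2 * j.1) ⊗ₜ[k] j.2) := by
  have h := congrArg (⇑(TensorProduct.assoc k H H H)) (wul hT)
  simpa only [map_sum, TensorProduct.assoc_tmul] using h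

/-- home-2 version of `wur`. -/
lemma wur2 (hT : IsRep W T) :
    ∑ i ∈ T 1, ∑ p ∈ T i.1, p.1 ⊗ₜ[k] (p.2 ⊗ₜ[k] i.2)
      = ∑ i ∈ T 1, ∑ j ∈ T 1, j.1 ⊗ₜ[k] ((i.1 * j.2) ⊗ₜ[k] i.2) := by
  have h := congrArg (⇑(TensorProduct.assoc k H H H)) (wur hT)
  simpa only [map_sum, TensorProduct.assoc_tmul] using h

/-- `∑ ε_s(1₁) ⊗ 1₂ = Δ(1)`. -/
lemma abs_s (hT : IsRep W T) :
    ∑ i ∈ T 1, W.εsL i.1 ⊗ₜ[k] i.2 = W.comul 1 := by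
  have h := congrArg (⇑(TensorProduct.map (coR W) (LinearMap.id (R := k) (M := H)))) (wur hT)
  simp only [map_sum, TensorProduct.map_tmul, coR_tmul, LinearMap.id_coe, id_eq] at h
  have l1 : ∑ i ∈ T 1, ∑ p ∈ T i.1, (W.counit p.2 • p.1) ⊗ₜ[k] i.2 = W.comul 1 := by
    rw [hT 1]
    refine Finset.sum_congr rfl fun i _ => ?_
    rw [← sum_tmul, counit_rid hT i.1]
  have l2 : ∑ i ∈ T 1, ∑ j ∈ T 1, (W.counit (i.1 * j.2) • j.1) ⊗ₜ[k] i.2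
      = ∑ i ∈ T 1, W.εsL i.1 ⊗ₜ[k] i.2 := by
    refine Finset.sum_congr rfl fun i _ => ?_
    rw [← sum_tmul, ← εs_apply hT i.1]
  rw [← l2, ← l1, h]

/-- `∑ 1₁ ⊗ ε_t(1₂) = Δ(1)`. -/
lemma abs_t (hT : IsRep W T) :
    ∑ i ∈ T 1, i.1 ⊗ₜ[k] W.εtL i.2 = W.comul 1 := by
  have h := congrArg (⇑(sc2 W)) (wur hT)
  simp only [map_sum, sc2_tmul] at h
  have l1 : ∑ i ∈ T 1, ∑ p ∈ T i.1, W.counit p.2 • (p.1 ⊗ₜ[k] i.2) = W.comul 1 := by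
    rw [hT 1]
    refine Finset.sum_congr rfl fun i _ => ?_
    have : ∀ p : H × H, W.counit p.2 • (p.1 ⊗ₜ[k] i.2) = (W.counit p.2 • p.1) ⊗ₜ[k] i.2 :=
      fun p => by rw [smul_tmul']
    rw [Finset.sum_congr rfl fun p _ => this p, ← sum_tmul, counit_rid hT i.1]
  have l2 : ∑ i ∈ T 1, ∑ j ∈ T 1, W.counit (i.1 * j.2) • (j.1 ⊗ₜ[k] i.2)
      = ∑ j ∈ T 1, j.1 ⊗ₜ[k] W.εtL j.2 := by
    rw [Finset.sum_comm]
    refine Finset.sum_congr rfl fun j _ => ?_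
    rw [εt_apply hT j.2, tmul_sum]
    exact Finset.sum_congr rfl fun i _ => by rw [tmul_smul]
  rw [← l2, ← l1, h]

end

end WeakHopfSep

namespace WeakHopfSep

open TensorProduct Finset
set_option maxHeartbeats 1000000
set_option synthInstance.maxHeartbeats 400000

variable {k H : Type*} [Field k] [Ring H] [Algebra k H]
variable {W : WeakHopf k H} {T : H → Finset (H × H)}

section

/-- `x ⊗ (y ⊗ z) ↦ (f x * g y) ⊗ z`. -/
noncomputable def m2L (f g : H →ₗ[k] H) : H ⊗[k] (H ⊗[k] H) →ₗ[k] H ⊗[k] H :=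
  (TensorProduct.map (bi f g) LinearMap.id) ∘ₗ (TensorProduct.assoc k H H H).symm.toLinearMap

@[simp] lemma m2L_tmul (f g : H →ₗ[k] H) (x y z : H) :
    m2L f g (x ⊗ₜ (y ⊗ₜ z)) = (f x * g y) ⊗ₜ z := by
  simp [m2L]

/-- `x ⊗ (y ⊗ z) ↦ x ⊗ (f y * g z)`. -/
noncomputable def m2R (f g : H →ₗ[k] H) : H ⊗[k] (H ⊗[k] H) →ₗ[k] H ⊗[k] H :=
  TensorProduct.map LinearMap.id (bi f g)

@[simp] lemma m2R_tmul (f g : H →ₗ[k] H) (x y z : H) :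
    m2R f g (x ⊗ₜ (y ⊗ₜ z)) = x ⊗ₜ (f y * g z) := by
  simp [m2R]

/-- `x ⊗ (y ⊗ z) ↦ f x * (g y * h z)`. -/
noncomputable def tri2 (f g h : H →ₗ[k] H) : H ⊗[k] (H ⊗[k] H) →ₗ[k] H :=
  LinearMap.mul' k H ∘ₗ TensorProduct.map f (bi g h)

@[simp] lemma tri2_tmul (f g h : H →ₗ[k] H) (x y z : H) :
    tri2 f g h (x ⊗ₜ (y ⊗ₜ z)) = f x * (g y * h z) := by
  simp [tri2, LinearMap.mul'_apply]

lemma expand_pair (hT : IsRep W T) (c : H) (u : H) :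
    (TensorProduct.assoc k H H H) ((TensorProduct.map W.comul LinearMap.id) (c ⊗ₜ[k] u))
      = ∑ p ∈ T c, p.1 ⊗ₜ[k] (p.2 ⊗ₜ[k] u) := by
  rw [TensorProduct.map_tmul, hT c, sum_tmul, map_sum]
  simp

/-- coassociativity at `x` in sum form (second home). -/
lemma coassocX (hT : IsRep W T) (x : H) :
    ∑ p ∈ T x, ∑ q ∈ T p.1, q.1 ⊗ₜ[k] (q.2 ⊗ₜ[k] p.2)
      = ∑ p ∈ T x, ∑ r ∈ T p.2, p.1 ⊗ₜ[k] (r.1 ⊗ₜ[k] r.2) := by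
  have e1 : (TensorProduct.assoc k H H H)
        ((TensorProduct.map W.comul LinearMap.id) (W.comul x))
      = ∑ p ∈ T x, ∑ q ∈ T p.1, q.1 ⊗ₜ[k] (q.2 ⊗ₜ[k] p.2) := by
    rw [hT x, map_sum, map_sum]
    exact Finset.sum_congr rfl fun p _ => expand_pair hT p.1 p.2
  have e2 : (TensorProduct.map LinearMap.id W.comul) (W.comul x)
      = ∑ p ∈ T x, ∑ r ∈ T p.2, p.1 ⊗ₜ[k] (r.1 ⊗ₜ[k] r.2) := by
    rw [hT x, map_sum]
    refine Finset.sum_congr rfl fun p _ => ?_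
    rw [TensorProduct.map_tmul, hT p.2, tmul_sum]
    simp
  rw [← e1, ← e2, W.coassoc x]

/-- εs-absorption on the first leg of the 3-fold expansion of `Δ1`. -/
lemma M5 (hT : IsRep W T) :
    ∑ i ∈ T 1, ∑ p ∈ T i.1, W.εsL p.1 ⊗ₜ[k] (p.2 ⊗ₜ[k] i.2)
      = ∑ i ∈ T 1, ∑ p ∈ T i.1, p.1 ⊗ₜ[k] (p.2 ⊗ₜ[k] i.2) := by
  have h1 := congrArg
    (⇑(TensorProduct.map W.εsL (LinearMap.id (R := k) (M := H ⊗[k] H)))) (coassocX hT 1)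
  simp only [map_sum, TensorProduct.map_tmul, LinearMap.id_coe, id_eq] at h1
  have h2 := congrArg
    (⇑(TensorProduct.map (LinearMap.id (R := k) (M := H)) W.comul)) (abs_s hT)
  simp only [map_sum, TensorProduct.map_tmul, LinearMap.id_coe, id_eq] at h2
  have l : ∀ c d : H, c ⊗ₜ[k] W.comul d = ∑ r ∈ T d, c ⊗ₜ[k] (r.1 ⊗ₜ[k] r.2) :=
    fun c d => by rw [hT d, tmul_sum]
  have h2' : ∑ i ∈ T 1, ∑ r ∈ T i.2, W.εsL i.1 ⊗ₜ[k] (r.1 ⊗ₜ[k] r.2)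
      = ∑ i ∈ T 1, ∑ r ∈ T i.2, i.1 ⊗ₜ[k] (r.1 ⊗ₜ[k] r.2) := by
    calc ∑ i ∈ T 1, ∑ r ∈ T i.2, W.εsL i.1 ⊗ₜ[k] (r.1 ⊗ₜ[k] r.2)
        = ∑ i ∈ T 1, W.εsL i.1 ⊗ₜ[k] W.comul i.2 :=
          Finset.sum_congr rfl fun i _ => (l _ _).symm
      _ = (TensorProduct.map (LinearMap.id (R := k) (M := H)) W.comul) (W.comul 1) := h2
      _ = ∑ i ∈ T 1, i.1 ⊗ₜ[k] W.comul i.2 := by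
          rw [hT 1, map_sum]; exact Finset.sum_congr rfl fun i _ => by simp
      _ = ∑ i ∈ T 1, ∑ r ∈ T i.2, i.1 ⊗ₜ[k] (r.1 ⊗ₜ[k] r.2) :=
          Finset.sum_congr rfl fun i _ => l _ _
  rw [h1, h2', ← coassocX hT 1]

/-- εt-absorption on the last leg (first grouping). -/
lemma M4a (hT : IsRep W T) :
    ∑ i ∈ T 1, ∑ p ∈ T i.1, p.1 ⊗ₜ[k] (p.2 ⊗ₜ[k] W.εtL i.2)
      = ∑ i ∈ T 1, ∑ p ∈ T i.1, p.1 ⊗ₜ[k] (p.2 ⊗ₜ[k] i.2) := by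
  calc ∑ i ∈ T 1, ∑ p ∈ T i.1, p.1 ⊗ₜ[k] (p.2 ⊗ₜ[k] W.εtL i.2)
      = (TensorProduct.assoc k H H H) ((TensorProduct.map W.comul LinearMap.id)
          (∑ i ∈ T 1, i.1 ⊗ₜ[k] W.εtL i.2)) := by
        rw [map_sum, map_sum]
        exact (Finset.sum_congr rfl fun i _ => expand_pair hT i.1 (W.εtL i.2)).symm
    _ = (TensorProduct.assoc k H H H) ((TensorProduct.map W.comul LinearMap.id)
          (W.comul 1)) := by rw [abs_t hT]
    _ = ∑ i ∈ T 1, ∑ p ∈ T i.1, p.1 ⊗ₜ[k] (p.2 ⊗ₜ[k] i.2) := by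
        rw [hT 1, map_sum, map_sum]
        exact Finset.sum_congr rfl fun i _ => expand_pair hT i.1 i.2

/-- εt-absorption on the last leg (second grouping). -/
lemma M4b (hT : IsRep W T) :
    ∑ i ∈ T 1, ∑ q ∈ T i.2, i.1 ⊗ₜ[k] (q.1 ⊗ₜ[k] W.εtL q.2)
      = ∑ i ∈ T 1, ∑ q ∈ T i.2, i.1 ⊗ₜ[k] (q.1 ⊗ₜ[k] q.2) := by
  have h := congrArg
    (⇑(TensorProduct.map (LinearMap.id (R := k) (M := H))
        (TensorProduct.map (LinearMap.id (R := k) (M := H)) W.εtL))) (coassocX hT 1)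
  simp only [map_sum, TensorProduct.map_tmul, LinearMap.id_coe, id_eq] at h
  exact h.symm.trans ((M4a hT).trans (coassocX hT 1))

/-- `S x = ∑ S(x₁) x₂ S(x₃)` in sum form. -/
lemma Smid (hT : IsRep W T) (x : H) :
    ∑ p ∈ T x, ∑ q ∈ T p.1, W.antipode q.1 * q.2 * W.antipode p.2 = W.antipode x := by
  have ax := W.antipode_mid x
  have e1 : (LinearMap.mul' k H)
      ((TensorProduct.map (LinearMap.mul' k H ∘ₗ TensorProduct.map W.antipode LinearMap.id)
        W.antipode) ((TensorProduct.map W.comul LinearMap.id) (W.comul x)))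
      = ∑ p ∈ T x, ∑ q ∈ T p.1, W.antipode q.1 * q.2 * W.antipode p.2 := by
    rw [hT x, map_sum, map_sum, map_sum]
    refine Finset.sum_congr rfl fun p _ => ?_
    rw [TensorProduct.map_tmul, hT p.1, sum_tmul, map_sum, map_sum]
    refine Finset.sum_congr rfl fun q _ => ?_
    simp [LinearMap.mul'_apply]
  rw [← e1, ax]

/-- `S x = ∑ ε_s(x₁) S(x₂)`. -/
lemma C1x (hT : IsRep W T) (x : H) :
    ∑ p ∈ T x, W.εsL p.1 * W.antipode p.2 = W.antipode x := by
  rw [← Smid hT x]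
  refine Finset.sum_congr rfl fun p _ => ?_
  rw [← εs_S hT p.1, Finset.sum_mul]

/-- `S x = ∑ S(x₁) ε_t(x₂)`. -/
lemma C2x (hT : IsRep W T) (x : H) :
    ∑ p ∈ T x, W.antipode p.1 * W.εtL p.2 = W.antipode x := by
  have h := congrArg (⇑(tri2 W.antipode LinearMap.id W.antipode)) (coassocX hT x)
  simp only [map_sum, tri2_tmul, LinearMap.id_coe, id_eq] at h
  have l1 : ∑ p ∈ T x, ∑ q ∈ T p.1, W.antipode q.1 * (q.2 * W.antipode p.2)
      = W.antipode x := by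
    rw [← Smid hT x]
    exact Finset.sum_congr rfl fun p _ => Finset.sum_congr rfl fun q _ => (mul_assoc _ _ _).symm
  have l2 : ∑ p ∈ T x, ∑ r ∈ T p.2, W.antipode p.1 * (r.1 * W.antipode r.2)
      = ∑ p ∈ T x, W.antipode p.1 * W.εtL p.2 := by
    refine Finset.sum_congr rfl fun p _ => ?_
    rw [← Finset.mul_sum, εt_S hT p.2]
  rw [← l2, ← h, l1]

/-- `(S ⊗ id) Δ1 = (ε_t ⊗ id) Δ1`. -/
lemma sharp (hT : IsRep W T) :
    ∑ i ∈ T 1, W.antipode i.1 ⊗ₜ[k] i.2 = ∑ i ∈ T 1, W.εtL i.1 ⊗ₜ[k] i.2 := by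
  have h := congrArg (⇑(m2L (LinearMap.id (R := k) (M := H)) W.antipode)) (M5 hT)
  simp only [map_sum, m2L_tmul, LinearMap.id_coe, id_eq] at h
  calc ∑ i ∈ T 1, W.antipode i.1 ⊗ₜ[k] i.2
      = ∑ i ∈ T 1, ∑ p ∈ T i.1, (W.εsL p.1 * W.antipode p.2) ⊗ₜ[k] i.2 := by
        refine Finset.sum_congr rfl fun i _ => ?_
        rw [← sum_tmul, C1x hT i.1]
    _ = ∑ i ∈ T 1, ∑ p ∈ T i.1, (p.1 * W.antipode p.2) ⊗ₜ[k] i.2 := h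
    _ = ∑ i ∈ T 1, W.εtL i.1 ⊗ₜ[k] i.2 := by
        refine Finset.sum_congr rfl fun i _ => ?_
        rw [← sum_tmul, εt_S hT i.1]

/-- `(id ⊗ S) Δ1 = (id ⊗ ε_s) Δ1`. -/
lemma sharp' (hT : IsRep W T) :
    ∑ i ∈ T 1, i.1 ⊗ₜ[k] W.antipode i.2 = ∑ i ∈ T 1, i.1 ⊗ₜ[k] W.εsL i.2 := by
  have h := congrArg (⇑(m2R W.antipode (LinearMap.id (R := k) (M := H)))) (M4b hT)
  simp only [map_sum, m2R_tmul, LinearMap.id_coe, id_eq] at h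
  calc ∑ i ∈ T 1, i.1 ⊗ₜ[k] W.antipode i.2
      = ∑ i ∈ T 1, ∑ q ∈ T i.2, i.1 ⊗ₜ[k] (W.antipode q.1 * W.εtL q.2) := by
        refine Finset.sum_congr rfl fun i _ => ?_
        rw [← tmul_sum, C2x hT i.2]
    _ = ∑ i ∈ T 1, ∑ q ∈ T i.2, i.1 ⊗ₜ[k] (W.antipode q.1 * q.2) := h
    _ = ∑ i ∈ T 1, i.1 ⊗ₜ[k] W.εsL i.2 := by
        refine Finset.sum_congr rfl fun i _ => ?_
        rw [← tmul_sum, εs_S hT i.2]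

end

end WeakHopfSep

namespace WeakHopfSep

open TensorProduct Finset
set_option maxHeartbeats 1000000
set_option synthInstance.maxHeartbeats 400000

variable {k H : Type*} [Field k] [Ring H] [Algebra k H]
variable {W : WeakHopf k H} {T : H → Finset (H × H)}

section

/-- `(x ⊗ y) ⊗ z ↦ f x * g y * h z`. -/
noncomputable def tri1 (f g h : H →ₗ[k] H) : (H ⊗[k] H) ⊗[k] H →ₗ[k] H :=
  LinearMap.mul' k H ∘ₗ TensorProduct.map (bi f g) h

@[simp] lemma tri1_tmul (f g h : H →ₗ[k] H) (x y z : H) :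
    tri1 f g h ((x ⊗ₜ y) ⊗ₜ z) = f x * g y * h z := by
  simp [tri1, LinearMap.mul'_apply]

/-- `(x ⊗ y) ↦ φ x • y`. -/
noncomputable def coS (φ : H →ₗ[k] k) : H ⊗[k] H →ₗ[k] H :=
  (TensorProduct.lid k H).toLinearMap ∘ₗ TensorProduct.map φ LinearMap.id

@[simp] lemma coS_tmul (φ : H →ₗ[k] k) (x y : H) : coS φ (x ⊗ₜ y) = φ x • y := by
  simp [coS]

/-- `(x ⊗ y) ↦ φ y • x`. -/
noncomputable def coS' (φ : H →ₗ[k] k) : H ⊗[k] H →ₗ[k] H :=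
  (TensorProduct.rid k H).toLinearMap ∘ₗ TensorProduct.map LinearMap.id φ

@[simp] lemma coS'_tmul (φ : H →ₗ[k] k) (x y : H) : coS' φ (x ⊗ₜ y) = φ y • x := by
  simp [coS']

/-- `ε_s f * ε_t g = ε_t g * ε_s f`. -/
lemma COM (hT : IsRep W T) (f g : H) : W.εsL f * W.εtL g = W.εtL g * W.εsL f := by
  have h := congrArg
    (⇑(tri1 (ctr (W.counit ∘ₗ LinearMap.mulRight k g)) LinearMap.id
        (ctr (W.counit ∘ₗ LinearMap.mulLeft k f)))) ((wul hT).symm.trans (wur hT))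
  simp only [map_sum, tri1_tmul, LinearMap.id_coe, id_eq, ctr_mul, mul_ctr,
    LinearMap.coe_comp, Function.comp_apply, LinearMap.mulRight_apply,
    LinearMap.mulLeft_apply, smul_smul] at h
  have e1 : W.εtL g * W.εsL f
      = ∑ i ∈ T 1, ∑ j ∈ T 1,
          (W.counit (f * j.2) * W.counit (i.1 * g)) • (i.2 * j.1) := by
    rw [εt_apply hT, εs_apply hT, Finset.sum_mul_sum]
    exact Finset.sum_congr rfl fun i _ => Finset.sum_congr rfl fun j _ => by
      rw [smul_mul_assoc, mul_smul_comm, smul_smul, mul_comm (W.counit (i.1*g))]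
  have e2 : W.εsL f * W.εtL g
      = ∑ i ∈ T 1, ∑ j ∈ T 1,
          (W.counit (f * i.2) * W.counit (j.1 * g)) • (i.1 * j.2) := by
    rw [εs_apply hT, εt_apply hT, Finset.sum_mul_sum]
    exact Finset.sum_congr rfl fun i _ => Finset.sum_congr rfl fun j _ => by
      rw [smul_mul_assoc, mul_smul_comm, smul_smul]
  rw [e1, e2, h]

/-- `∑ 1₁ ⊗ Δ(x·1₂) = ∑ 1₁ ⊗ Δx·(1₂ ⊗ 1)`. -/
lemma KeyE (hT : IsRep W T) (x : H) :
    ∑ i ∈ T 1, i.1 ⊗ₜ[k] W.comul (x * i.2)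
      = ∑ i ∈ T 1, ∑ p ∈ T x, i.1 ⊗ₜ[k] ((p.1 * i.2) ⊗ₜ[k] p.2) := by
  have h := congrArg (fun u => ((1:H) ⊗ₜ[k] W.comul x) * u)
    ((coassocX hT 1).symm.trans (wur2 hT))
  simp only [Finset.mul_sum, Algebra.TensorProduct.tmul_mul_tmul, one_mul] at h
  have l : ∑ i ∈ T 1, ∑ q ∈ T i.2, i.1 ⊗ₜ[k] (W.comul x * (q.1 ⊗ₜ[k] q.2))
      = ∑ i ∈ T 1, i.1 ⊗ₜ[k] W.comul (x * i.2) := by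
    refine Finset.sum_congr rfl fun i _ => ?_
    rw [← tmul_sum, ← Finset.mul_sum, ← hT i.2, ← W.comul_mul]
  have r : ∑ i ∈ T 1, ∑ j ∈ T 1, j.1 ⊗ₜ[k] (W.comul x * ((i.1 * j.2) ⊗ₜ[k] i.2))
      = ∑ j ∈ T 1, ∑ p ∈ T x, j.1 ⊗ₜ[k] ((p.1 * j.2) ⊗ₜ[k] p.2) := by
    rw [Finset.sum_comm]
    refine Finset.sum_congr rfl fun j _ => ?_
    rw [← tmul_sum, ← tmul_sum]
    congr 1
    calc ∑ i ∈ T 1, W.comul x * ((i.1 * j.2) ⊗ₜ[k] i.2)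
        = ∑ i ∈ T 1, W.comul x * (i.1 ⊗ₜ[k] i.2) * (j.2 ⊗ₜ[k] (1:H)) := by
          refine Finset.sum_congr rfl fun i _ => ?_
          rw [mul_assoc, Algebra.TensorProduct.tmul_mul_tmul, mul_one]
      _ = W.comul x * W.comul 1 * (j.2 ⊗ₜ[k] (1:H)) := by
          rw [← Finset.sum_mul, ← Finset.mul_sum, ← hT 1]
      _ = W.comul x * (j.2 ⊗ₜ[k] (1:H)) := by
          rw [← W.comul_mul, mul_one]
      _ = ∑ p ∈ T x, (p.1 * j.2) ⊗ₜ[k] p.2 := by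
          rw [hT x, Finset.sum_mul]
          exact Finset.sum_congr rfl fun p _ => by
            rw [Algebra.TensorProduct.tmul_mul_tmul, mul_one]
  rw [← l, h, r]

end

end WeakHopfSep

namespace WeakHopfSep

open TensorProduct Finset
set_option maxHeartbeats 1000000
set_option synthInstance.maxHeartbeats 400000

variable {k H : Type*} [Field k] [Ring H] [Algebra k H]
variable {W : WeakHopf k H} {T : H → Finset (H × H)}

section

lemma Eid (hT : IsRep W T) (x : H) :
    ∑ i ∈ T 1, i.1 ⊗ₜ[k] W.εtL (x * i.2)
      = ∑ i ∈ T 1, ∑ p ∈ T x, i.1 ⊗ₜ[k] (p.1 * i.2 * W.antipode p.2) := by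
  have h := congrArg
    (⇑(TensorProduct.map (LinearMap.id (R := k) (M := H)) (bi LinearMap.id W.antipode)))
    (KeyE hT x)
  simp only [map_sum, TensorProduct.map_tmul, LinearMap.id_coe, id_eq, bi_tmul] at h
  calc ∑ i ∈ T 1, i.1 ⊗ₜ[k] W.εtL (x * i.2)
      = ∑ i ∈ T 1, i.1 ⊗ₜ[k] (bi LinearMap.id W.antipode (W.comul (x * i.2))) :=
        Finset.sum_congr rfl fun i _ => by rw [← εt_biS hT]
    _ = ∑ i ∈ T 1, ∑ p ∈ T x, i.1 ⊗ₜ[k] (p.1 * i.2 * W.antipode p.2) := by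
        rw [← h]

/-- `∑ x₁ · ε_t g · S(x₂) = ε_t (x g)`. -/
lemma Qa (hT : IsRep W T) (x g : H) :
    ∑ p ∈ T x, p.1 * W.εtL g * W.antipode p.2 = W.εtL (x * g) := by
  have h := congrArg (⇑(coS (W.counit ∘ₗ LinearMap.mulRight k g))) (Eid hT x)
  simp only [map_sum, coS_tmul, LinearMap.coe_comp, Function.comp_apply,
    LinearMap.mulRight_apply] at h
  have l : ∑ i ∈ T 1, W.counit (i.1 * g) • W.εtL (x * i.2) = W.εtL (x * g) := by
    rw [← Ct2 hT x g]
    rw [show x * W.εtL g = ∑ i ∈ T 1, W.counit (i.1 * g) • (x * i.2) by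
      rw [εt_apply hT g, Finset.mul_sum]
      exact Finset.sum_congr rfl fun i _ => (mul_smul_comm _ _ _)]
    rw [map_sum]
    exact Finset.sum_congr rfl fun i _ => by rw [map_smul]
  have r : ∑ i ∈ T 1, ∑ p ∈ T x, W.counit (i.1 * g) • (p.1 * i.2 * W.antipode p.2)
      = ∑ p ∈ T x, p.1 * W.εtL g * W.antipode p.2 := by
    rw [Finset.sum_comm]
    refine Finset.sum_congr rfl fun p _ => ?_
    rw [εt_apply hT g, Finset.mul_sum, Finset.sum_mul]
    exact Finset.sum_congr rfl fun i _ => by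
      rw [mul_smul_comm, smul_mul_assoc]
  rw [← r, ← h, l]

lemma KeyE' (hT : IsRep W T) (x : H) :
    ∑ i ∈ T 1, W.comul (i.1 * x) ⊗ₜ[k] i.2
      = ∑ i ∈ T 1, ∑ p ∈ T x, (p.1 ⊗ₜ[k] (i.1 * p.2)) ⊗ₜ[k] i.2 := by
  have h := congrArg (fun u => u * (W.comul x ⊗ₜ[k] (1:H))) (wur hT)
  simp only [Finset.sum_mul, Algebra.TensorProduct.tmul_mul_tmul, mul_one] at h
  have l : ∑ i ∈ T 1, ∑ p ∈ T i.1, ((p.1 ⊗ₜ[k] p.2) * W.comul x) ⊗ₜ[k] i.2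
      = ∑ i ∈ T 1, W.comul (i.1 * x) ⊗ₜ[k] i.2 := by
    refine Finset.sum_congr rfl fun i _ => ?_
    rw [← sum_tmul, ← Finset.sum_mul, ← hT i.1, ← W.comul_mul]
  have r : ∑ i ∈ T 1, ∑ j ∈ T 1, ((j.1 ⊗ₜ[k] (i.1 * j.2)) * W.comul x) ⊗ₜ[k] i.2
      = ∑ i ∈ T 1, ∑ p ∈ T x, (p.1 ⊗ₜ[k] (i.1 * p.2)) ⊗ₜ[k] i.2 := by
    refine Finset.sum_congr rfl fun i _ => ?_
    rw [← sum_tmul, ← sum_tmul]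
    congr 1
    calc ∑ j ∈ T 1, (j.1 ⊗ₜ[k] (i.1 * j.2)) * W.comul x
        = ∑ j ∈ T 1, ((1:H) ⊗ₜ[k] i.1) * (j.1 ⊗ₜ[k] j.2) * W.comul x := by
          refine Finset.sum_congr rfl fun j _ => ?_
          rw [Algebra.TensorProduct.tmul_mul_tmul, one_mul]
      _ = ((1:H) ⊗ₜ[k] i.1) * (W.comul 1 * W.comul x) := by
          rw [← Finset.sum_mul, ← Finset.mul_sum, ← hT 1, mul_assoc]
      _ = ((1:H) ⊗ₜ[k] i.1) * W.comul x := by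
          rw [← W.comul_mul, one_mul]
      _ = ∑ p ∈ T x, p.1 ⊗ₜ[k] (i.1 * p.2) := by
          rw [hT x, Finset.mul_sum]
          exact Finset.sum_congr rfl fun p _ => by
            rw [Algebra.TensorProduct.tmul_mul_tmul, one_mul]
  rw [← l, h, r]

lemma E'id (hT : IsRep W T) (x : H) :
    ∑ i ∈ T 1, W.εsL (i.1 * x) ⊗ₜ[k] i.2
      = ∑ i ∈ T 1, ∑ p ∈ T x, (W.antipode p.1 * (i.1 * p.2)) ⊗ₜ[k] i.2 := by
  have h := congrArg
    (⇑(TensorProduct.map (bi W.antipode LinearMap.id) (LinearMap.id (R := k) (M := H))))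
    (KeyE' hT x)
  simp only [map_sum, TensorProduct.map_tmul, LinearMap.id_coe, id_eq, bi_tmul] at h
  calc ∑ i ∈ T 1, W.εsL (i.1 * x) ⊗ₜ[k] i.2
      = ∑ i ∈ T 1, (bi W.antipode LinearMap.id (W.comul (i.1 * x))) ⊗ₜ[k] i.2 :=
        Finset.sum_congr rfl fun i _ => by rw [← εs_biS hT]
    _ = ∑ i ∈ T 1, ∑ p ∈ T x, (W.antipode p.1 * (i.1 * p.2)) ⊗ₜ[k] i.2 := by
        rw [← h]

/-- `∑ S(x₁) · ε_s f · x₂ = ε_s (f x)`. -/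
lemma Qb (hT : IsRep W T) (x f : H) :
    ∑ p ∈ T x, W.antipode p.1 * W.εsL f * p.2 = W.εsL (f * x) := by
  have h := congrArg (⇑(coS' (W.counit ∘ₗ LinearMap.mulLeft k f))) (E'id hT x)
  simp only [map_sum, coS'_tmul, LinearMap.coe_comp, Function.comp_apply,
    LinearMap.mulLeft_apply] at h
  have l : ∑ i ∈ T 1, W.counit (f * i.2) • W.εsL (i.1 * x) = W.εsL (f * x) := by
    rw [← Cs2 hT f x]
    rw [show W.εsL f * x = ∑ i ∈ T 1, W.counit (f * i.2) • (i.1 * x) by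
      rw [εs_apply hT f, Finset.sum_mul]
      exact Finset.sum_congr rfl fun i _ => (smul_mul_assoc _ _ _)]
    rw [map_sum]
    exact Finset.sum_congr rfl fun i _ => by rw [map_smul]
  have r : ∑ i ∈ T 1, ∑ p ∈ T x, W.counit (f * i.2) • (W.antipode p.1 * (i.1 * p.2))
      = ∑ p ∈ T x, W.antipode p.1 * W.εsL f * p.2 := by
    rw [Finset.sum_comm]
    refine Finset.sum_congr rfl fun p _ => ?_
    rw [εs_apply hT f, Finset.mul_sum, Finset.sum_mul]
    exact Finset.sum_congr rfl fun i _ => by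
      rw [mul_smul_comm, smul_mul_assoc, mul_assoc]
  rw [← r, ← h, l]

/-- `∑ 1₁ ⊗ ε_t(1₂ g) = ∑ 1₁ ⊗ 1₂ · ε_t g`. -/
lemma B2 (hT : IsRep W T) (g : H) :
    ∑ i ∈ T 1, i.1 ⊗ₜ[k] W.εtL (i.2 * g) = ∑ i ∈ T 1, i.1 ⊗ₜ[k] (i.2 * W.εtL g) := by
  have h := congrArg (fun u => u * ((1:H) ⊗ₜ[k] W.comul g))
    ((coassocX hT 1).symm.trans (wul2 hT))
  simp only [Finset.sum_mul, Algebra.TensorProduct.tmul_mul_tmul, mul_one, one_mul] at h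
  -- h : ∑ᵢq i.1 ⊗ ((q.1⊗q.2) * Δg) = ∑ᵢⱼ i.1 ⊗ (((i.2*j.1)⊗j.2) * Δg)
  have l : ∑ i ∈ T 1, ∑ q ∈ T i.2, i.1 ⊗ₜ[k] ((q.1 ⊗ₜ[k] q.2) * W.comul g)
      = ∑ i ∈ T 1, i.1 ⊗ₜ[k] W.comul (i.2 * g) := by
    refine Finset.sum_congr rfl fun i _ => ?_
    rw [← tmul_sum, ← Finset.sum_mul, ← hT i.2, ← W.comul_mul]
  have r : ∑ i ∈ T 1, ∑ j ∈ T 1, i.1 ⊗ₜ[k] (((i.2 * j.1) ⊗ₜ[k] j.2) * W.comul g)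
      = ∑ i ∈ T 1, ∑ p ∈ T g, i.1 ⊗ₜ[k] ((i.2 * p.1) ⊗ₜ[k] p.2) := by
    refine Finset.sum_congr rfl fun i _ => ?_
    rw [← tmul_sum, ← tmul_sum]
    congr 1
    calc ∑ j ∈ T 1, ((i.2 * j.1) ⊗ₜ[k] j.2) * W.comul g
        = ∑ j ∈ T 1, (i.2 ⊗ₜ[k] (1:H)) * (j.1 ⊗ₜ[k] j.2) * W.comul g := by
          refine Finset.sum_congr rfl fun j _ => ?_
          rw [Algebra.TensorProduct.tmul_mul_tmul, one_mul]
      _ = (i.2 ⊗ₜ[k] (1:H)) * (W.comul 1 * W.comul g) := by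
          rw [← Finset.sum_mul, ← Finset.mul_sum, ← hT 1, mul_assoc]
      _ = (i.2 ⊗ₜ[k] (1:H)) * W.comul g := by rw [← W.comul_mul, one_mul]
      _ = ∑ p ∈ T g, (i.2 * p.1) ⊗ₜ[k] p.2 := by
          rw [hT g, Finset.mul_sum]
          exact Finset.sum_congr rfl fun p _ => by
            rw [Algebra.TensorProduct.tmul_mul_tmul, one_mul]
  have hh : ∑ i ∈ T 1, i.1 ⊗ₜ[k] W.comul (i.2 * g)
      = ∑ i ∈ T 1, ∑ p ∈ T g, i.1 ⊗ₜ[k] ((i.2 * p.1) ⊗ₜ[k] p.2) := by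
    rw [← l, h, r]
  have h2 := congrArg
    (⇑(TensorProduct.map (LinearMap.id (R := k) (M := H)) (bi LinearMap.id W.antipode))) hh
  simp only [map_sum, TensorProduct.map_tmul, LinearMap.id_coe, id_eq, bi_tmul] at h2
  calc ∑ i ∈ T 1, i.1 ⊗ₜ[k] W.εtL (i.2 * g)
      = ∑ i ∈ T 1, i.1 ⊗ₜ[k] (bi LinearMap.id W.antipode (W.comul (i.2 * g))) :=
        Finset.sum_congr rfl fun i _ => by rw [← εt_biS hT]
    _ = ∑ i ∈ T 1, ∑ p ∈ T g, i.1 ⊗ₜ[k] (i.2 * p.1 * W.antipode p.2) := by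
        rw [← h2]
    _ = ∑ i ∈ T 1, i.1 ⊗ₜ[k] (i.2 * W.εtL g) := by
        refine Finset.sum_congr rfl fun i _ => ?_
        rw [← tmul_sum, ← εt_S hT g, Finset.mul_sum]
        congr 1
        exact Finset.sum_congr rfl fun p _ => by rw [mul_assoc]

/-- `∑ ε_s(f 1₁) ⊗ 1₂ = ∑ ε_s f · 1₁ ⊗ 1₂`. -/
lemma A20' (hT : IsRep W T) (f : H) :
    ∑ i ∈ T 1, W.εsL (f * i.1) ⊗ₜ[k] i.2 = ∑ i ∈ T 1, (W.εsL f * i.1) ⊗ₜ[k] i.2 := by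
  have h := congrArg (fun u => (W.comul f ⊗ₜ[k] (1:H)) * u) (wul hT)
  simp only [Finset.mul_sum, Algebra.TensorProduct.tmul_mul_tmul, mul_one, one_mul] at h
  have l : ∑ i ∈ T 1, ∑ p ∈ T i.1, (W.comul f * (p.1 ⊗ₜ[k] p.2)) ⊗ₜ[k] i.2
      = ∑ i ∈ T 1, W.comul (f * i.1) ⊗ₜ[k] i.2 := by
    refine Finset.sum_congr rfl fun i _ => ?_
    rw [← sum_tmul, ← Finset.mul_sum, ← hT i.1, ← W.comul_mul]
  have r : ∑ i ∈ T 1, ∑ j ∈ T 1, (W.comul f * (i.1 ⊗ₜ[k] (i.2 * j.1))) ⊗ₜ[k] j.2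
      = ∑ j ∈ T 1, ∑ p ∈ T f, (p.1 ⊗ₜ[k] (p.2 * j.1)) ⊗ₜ[k] j.2 := by
    rw [Finset.sum_comm]
    refine Finset.sum_congr rfl fun j _ => ?_
    rw [← sum_tmul, ← sum_tmul]
    congr 1
    calc ∑ i ∈ T 1, W.comul f * (i.1 ⊗ₜ[k] (i.2 * j.1))
        = ∑ i ∈ T 1, W.comul f * (i.1 ⊗ₜ[k] i.2) * ((1:H) ⊗ₜ[k] j.1) := by
          refine Finset.sum_congr rfl fun i _ => ?_
          rw [mul_assoc, Algebra.TensorProduct.tmul_mul_tmul, mul_one]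
      _ = W.comul f * W.comul 1 * ((1:H) ⊗ₜ[k] j.1) := by
          rw [← Finset.sum_mul, ← Finset.mul_sum, ← hT 1]
      _ = W.comul f * ((1:H) ⊗ₜ[k] j.1) := by rw [← W.comul_mul, mul_one]
      _ = ∑ p ∈ T f, p.1 ⊗ₜ[k] (p.2 * j.1) := by
          rw [hT f, Finset.sum_mul]
          exact Finset.sum_congr rfl fun p _ => by
            rw [Algebra.TensorProduct.tmul_mul_tmul, mul_one]
  have hh : ∑ i ∈ T 1, W.comul (f * i.1) ⊗ₜ[k] i.2
      = ∑ i ∈ T 1, ∑ p ∈ T f, (p.1 ⊗ₜ[k] (p.2 * i.1)) ⊗ₜ[k] i.2 := by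
    rw [← l, h, r]
  have h2 := congrArg
    (⇑(TensorProduct.map (bi W.antipode LinearMap.id) (LinearMap.id (R := k) (M := H)))) hh
  simp only [map_sum, TensorProduct.map_tmul, LinearMap.id_coe, id_eq, bi_tmul] at h2
  calc ∑ i ∈ T 1, W.εsL (f * i.1) ⊗ₜ[k] i.2
      = ∑ i ∈ T 1, (bi W.antipode LinearMap.id (W.comul (f * i.1))) ⊗ₜ[k] i.2 :=
        Finset.sum_congr rfl fun i _ => by rw [← εs_biS hT]
    _ = ∑ i ∈ T 1, ∑ p ∈ T f, (W.antipode p.1 * (p.2 * i.1)) ⊗ₜ[k] i.2 := by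
        rw [← h2]
    _ = ∑ i ∈ T 1, (W.εsL f * i.1) ⊗ₜ[k] i.2 := by
        refine Finset.sum_congr rfl fun i _ => ?_
        rw [← sum_tmul, ← εs_S hT f, Finset.sum_mul]
        congr 1
        exact Finset.sum_congr rfl fun p _ => by rw [mul_assoc]
  
end

end WeakHopfSep

namespace WeakHopfSep

open TensorProduct Finset
set_option maxHeartbeats 1000000
set_option synthInstance.maxHeartbeats 400000

variable {k H : Type*} [Field k] [Ring H] [Algebra k H]
variable {W : WeakHopf k H} {T : H → Finset (H × H)}

section

lemma T3 (hT : IsRep W T) (g : H) :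
    ∑ i ∈ T 1, W.εtL (i.1 * g) ⊗ₜ[k] i.2
      = ∑ i ∈ T 1, W.εtL i.1 ⊗ₜ[k] W.εtL (i.2 * g) := by
  have u1 : ∑ i ∈ T 1, W.εtL (i.1 * g) ⊗ₜ[k] W.εtL i.2
      = ∑ i ∈ T 1, W.εtL (i.1 * g) ⊗ₜ[k] i.2 := by
    have h := congrArg (⇑(TensorProduct.map (W.εtL ∘ₗ LinearMap.mulRight k g)
        (LinearMap.id (R := k) (M := H)))) (abs_t hT)
    rw [hT 1] at h
    simpa only [map_sum, TensorProduct.map_tmul, LinearMap.coe_comp, Function.comp_apply,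
      LinearMap.mulRight_apply, LinearMap.id_coe, id_eq] using h
  have h := congrArg (⇑(TensorProduct.map W.εtL
      (bi (ctr (W.counit ∘ₗ LinearMap.mulRight k g)) W.εtL))) (coassocX hT 1)
  simp only [map_sum, TensorProduct.map_tmul, bi_tmul, ctr_mul, LinearMap.coe_comp,
    Function.comp_apply, LinearMap.mulRight_apply] at h
  have u2 : ∑ i ∈ T 1, W.εtL (i.1 * g) ⊗ₜ[k] W.εtL i.2
      = ∑ i ∈ T 1, ∑ p ∈ T i.1, W.εtL p.1 ⊗ₜ[k] (W.counit (p.2 * g) • W.εtL i.2) := by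
    refine Finset.sum_congr rfl fun i _ => ?_
    rw [nu hT i.1 g, sum_tmul]
    exact Finset.sum_congr rfl fun p _ => by rw [smul_tmul]
  have u3 : ∑ i ∈ T 1, ∑ q ∈ T i.2, W.εtL i.1 ⊗ₜ[k] (W.counit (q.1 * g) • W.εtL q.2)
      = ∑ i ∈ T 1, W.εtL i.1 ⊗ₜ[k] W.εtL (i.2 * g) := by
    refine Finset.sum_congr rfl fun i _ => ?_
    rw [mu hT i.2 g, tmul_sum]
  rw [← u1, u2, h, u3]

lemma T3' (hT : IsRep W T) (f : H) :
    ∑ i ∈ T 1, i.1 ⊗ₜ[k] W.εsL (f * i.2)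
      = ∑ i ∈ T 1, W.εsL (f * i.1) ⊗ₜ[k] W.εsL i.2 := by
  have v1 : ∑ i ∈ T 1, W.εsL i.1 ⊗ₜ[k] W.εsL (f * i.2)
      = ∑ i ∈ T 1, i.1 ⊗ₜ[k] W.εsL (f * i.2) := by
    have h := congrArg (⇑(TensorProduct.map (LinearMap.id (R := k) (M := H))
        (W.εsL ∘ₗ LinearMap.mulLeft k f))) (abs_s hT)
    rw [hT 1] at h
    simpa only [map_sum, TensorProduct.map_tmul, LinearMap.coe_comp, Function.comp_apply,
      LinearMap.mulLeft_apply, LinearMap.id_coe, id_eq] using h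
  have h := congrArg (⇑(TensorProduct.map W.εsL
      (bi (ctr (W.counit ∘ₗ LinearMap.mulLeft k f)) W.εsL))) (coassocX hT 1)
  simp only [map_sum, TensorProduct.map_tmul, bi_tmul, ctr_mul, LinearMap.coe_comp,
    Function.comp_apply, LinearMap.mulLeft_apply] at h
  have v2 : ∑ i ∈ T 1, W.εsL i.1 ⊗ₜ[k] W.εsL (f * i.2)
      = ∑ i ∈ T 1, ∑ q ∈ T i.2, W.εsL i.1 ⊗ₜ[k] (W.counit (f * q.1) • W.εsL q.2) := by
    refine Finset.sum_congr rfl fun i _ => ?_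
    rw [mu' hT f i.2, tmul_sum]
  have v3 : ∑ i ∈ T 1, ∑ p ∈ T i.1, W.εsL p.1 ⊗ₜ[k] (W.counit (f * p.2) • W.εsL i.2)
      = ∑ i ∈ T 1, W.εsL (f * i.1) ⊗ₜ[k] W.εsL i.2 := by
    refine Finset.sum_congr rfl fun i _ => ?_
    rw [nu' hT f i.1, sum_tmul]
    exact Finset.sum_congr rfl fun p _ => by rw [smul_tmul]
  rw [← v1, v2, ← h, v3]

lemma Bridge1 (hT : IsRep W T) (g : H) :
    ∑ i ∈ T 1, (W.εtL g * W.εtL i.1) ⊗ₜ[k] i.2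
      = ∑ i ∈ T 1, W.εtL (i.1 * g) ⊗ₜ[k] i.2 := by
  have hA := congrArg (⇑(m2L (LinearMap.mulRight k (W.εtL g)) W.antipode)) (M5 hT)
  simp only [map_sum, m2L_tmul, LinearMap.mulRight_apply] at hA
  have hB := congrArg (⇑(m2L (LinearMap.mulLeft k (W.εtL g)) W.antipode)) (M5 hT)
  simp only [map_sum, m2L_tmul, LinearMap.mulLeft_apply] at hB
  calc ∑ i ∈ T 1, (W.εtL g * W.εtL i.1) ⊗ₜ[k] i.2
      = ∑ i ∈ T 1, ∑ p ∈ T i.1, (W.εtL g * p.1 * W.antipode p.2) ⊗ₜ[k] i.2 := by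
        refine Finset.sum_congr rfl fun i _ => ?_
        rw [← sum_tmul]
        congr 1
        rw [← εt_S hT i.1, Finset.mul_sum]
        exact Finset.sum_congr rfl fun p _ => (mul_assoc _ _ _).symm
    _ = ∑ i ∈ T 1, ∑ p ∈ T i.1, (W.εtL g * W.εsL p.1 * W.antipode p.2) ⊗ₜ[k] i.2 :=
        hB.symm
    _ = ∑ i ∈ T 1, ∑ p ∈ T i.1, (W.εsL p.1 * W.εtL g * W.antipode p.2) ⊗ₜ[k] i.2 := by
        exact Finset.sum_congr rfl fun i _ => Finset.sum_congr rfl fun p _ => by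
          rw [COM hT p.1 g]
    _ = ∑ i ∈ T 1, ∑ p ∈ T i.1, (p.1 * W.εtL g * W.antipode p.2) ⊗ₜ[k] i.2 := hA
    _ = ∑ i ∈ T 1, W.εtL (i.1 * g) ⊗ₜ[k] i.2 := by
        refine Finset.sum_congr rfl fun i _ => ?_
        rw [← sum_tmul, Qa hT i.1 g]

lemma A23' (hT : IsRep W T) (f : H) :
    ∑ i ∈ T 1, i.1 ⊗ₜ[k] (W.εsL i.2 * W.εsL f)
      = ∑ i ∈ T 1, i.1 ⊗ₜ[k] W.εsL (f * i.2) := by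
  have hC := congrArg
    (⇑(m2R (LinearMap.mulRight k (W.εsL f) ∘ₗ W.antipode) LinearMap.id)) (M4b hT)
  simp only [map_sum, m2R_tmul, LinearMap.coe_comp, Function.comp_apply,
    LinearMap.mulRight_apply, LinearMap.id_coe, id_eq] at hC
  have hE := congrArg
    (⇑(m2R W.antipode (LinearMap.mulRight k (W.εsL f)))) (M4b hT)
  simp only [map_sum, m2R_tmul, LinearMap.mulRight_apply] at hE
  calc ∑ i ∈ T 1, i.1 ⊗ₜ[k] (W.εsL i.2 * W.εsL f)
      = ∑ i ∈ T 1, ∑ q ∈ T i.2, i.1 ⊗ₜ[k] (W.antipode q.1 * (q.2 * W.εsL f)) := by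
        refine Finset.sum_congr rfl fun i _ => ?_
        rw [← tmul_sum]
        congr 1
        rw [← εs_S hT i.2, Finset.sum_mul]
        exact Finset.sum_congr rfl fun q _ => (mul_assoc _ _ _)
    _ = ∑ i ∈ T 1, ∑ q ∈ T i.2, i.1 ⊗ₜ[k] (W.antipode q.1 * (W.εtL q.2 * W.εsL f)) :=
        hE.symm
    _ = ∑ i ∈ T 1, ∑ q ∈ T i.2, i.1 ⊗ₜ[k] (W.antipode q.1 * W.εsL f * W.εtL q.2) := by
        refine Finset.sum_congr rfl fun i _ => Finset.sum_congr rfl fun q _ => ?_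
        rw [← COM hT f q.2, ← mul_assoc]
    _ = ∑ i ∈ T 1, ∑ q ∈ T i.2, i.1 ⊗ₜ[k] (W.antipode q.1 * W.εsL f * q.2) := hC
    _ = ∑ i ∈ T 1, i.1 ⊗ₜ[k] W.εsL (f * i.2) := by
        refine Finset.sum_congr rfl fun i _ => ?_
        rw [← tmul_sum, Qb hT i.2 f]

/-- the `ε_t`-move for `Y = (S ⊗ id) Δ1`. -/
lemma Tmove (hT : IsRep W T) (g : H) :
    ∑ i ∈ T 1, (W.εtL g * W.antipode i.1) ⊗ₜ[k] i.2
      = ∑ i ∈ T 1, W.antipode i.1 ⊗ₜ[k] (i.2 * W.εtL g) := by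
  have s1 := congrArg (⇑(TensorProduct.map (LinearMap.mulLeft k (W.εtL g))
      (LinearMap.id (R := k) (M := H)))) (sharp hT)
  simp only [map_sum, TensorProduct.map_tmul, LinearMap.mulLeft_apply,
    LinearMap.id_coe, id_eq] at s1
  have s2 := congrArg (⇑(TensorProduct.map (LinearMap.id (R := k) (M := H))
      (LinearMap.mulRight k (W.εtL g)))) (sharp hT)
  simp only [map_sum, TensorProduct.map_tmul, LinearMap.mulRight_apply,
    LinearMap.id_coe, id_eq] at s2
  have s3 := congrArg (⇑(TensorProduct.map W.εtL (LinearMap.id (R := k) (M := H))))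
    (B2 hT g)
  simp only [map_sum, TensorProduct.map_tmul, LinearMap.id_coe, id_eq] at s3
  calc ∑ i ∈ T 1, (W.εtL g * W.antipode i.1) ⊗ₜ[k] i.2
      = ∑ i ∈ T 1, (W.εtL g * W.εtL i.1) ⊗ₜ[k] i.2 := s1
    _ = ∑ i ∈ T 1, W.εtL (i.1 * g) ⊗ₜ[k] i.2 := Bridge1 hT g
    _ = ∑ i ∈ T 1, W.εtL i.1 ⊗ₜ[k] W.εtL (i.2 * g) := T3 hT g
    _ = ∑ i ∈ T 1, W.εtL i.1 ⊗ₜ[k] (i.2 * W.εtL g) := s3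
    _ = ∑ i ∈ T 1, W.antipode i.1 ⊗ₜ[k] (i.2 * W.εtL g) := s2.symm

/-- the `ε_s`-move for `X = (id ⊗ S) Δ1`. -/
lemma Smove (hT : IsRep W T) (f : H) :
    ∑ i ∈ T 1, (W.εsL f * i.1) ⊗ₜ[k] W.antipode i.2
      = ∑ i ∈ T 1, i.1 ⊗ₜ[k] (W.antipode i.2 * W.εsL f) := by
  have s1 := congrArg (⇑(TensorProduct.map (LinearMap.id (R := k) (M := H)) W.antipode))
    (A20' hT f)
  simp only [map_sum, TensorProduct.map_tmul, LinearMap.id_coe, id_eq] at s1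
  have s2 := congrArg (⇑(TensorProduct.map (W.εsL ∘ₗ LinearMap.mulLeft k f)
      (LinearMap.id (R := k) (M := H)))) (sharp' hT)
  simp only [map_sum, TensorProduct.map_tmul, LinearMap.coe_comp, Function.comp_apply,
    LinearMap.mulLeft_apply, LinearMap.id_coe, id_eq] at s2
  have s3 := congrArg (⇑(TensorProduct.map (LinearMap.id (R := k) (M := H))
      (LinearMap.mulRight k (W.εsL f)))) (sharp' hT)
  simp only [map_sum, TensorProduct.map_tmul, LinearMap.mulRight_apply,
    LinearMap.id_coe, id_eq] at s3
  calc ∑ i ∈ T 1, (W.εsL f * i.1) ⊗ₜ[k] W.antipode i.2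
      = ∑ i ∈ T 1, W.εsL (f * i.1) ⊗ₜ[k] W.antipode i.2 := s1.symm
    _ = ∑ i ∈ T 1, W.εsL (f * i.1) ⊗ₜ[k] W.εsL i.2 := s2
    _ = ∑ i ∈ T 1, i.1 ⊗ₜ[k] W.εsL (f * i.2) := (T3' hT f).symm
    _ = ∑ i ∈ T 1, i.1 ⊗ₜ[k] (W.εsL i.2 * W.εsL f) := (A23' hT f).symm
    _ = ∑ i ∈ T 1, i.1 ⊗ₜ[k] (W.antipode i.2 * W.εsL f) := s3.symm

lemma XcommT (hT : IsRep W T) (g : H) :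
    ∑ i ∈ T 1, (W.εtL g * i.1) ⊗ₜ[k] W.antipode i.2
      = ∑ i ∈ T 1, (i.1 * W.εtL g) ⊗ₜ[k] W.antipode i.2 := by
  have e1 := congrArg (⇑(TensorProduct.map (LinearMap.mulLeft k (W.εtL g)) W.antipode))
    (abs_s hT)
  rw [hT 1] at e1
  simp only [map_sum, TensorProduct.map_tmul, LinearMap.mulLeft_apply] at e1
  have e2 := congrArg (⇑(TensorProduct.map (LinearMap.mulRight k (W.εtL g)) W.antipode))
    (abs_s hT)
  rw [hT 1] at e2
  simp only [map_sum, TensorProduct.map_tmul, LinearMap.mulRight_apply] at e2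
  calc ∑ i ∈ T 1, (W.εtL g * i.1) ⊗ₜ[k] W.antipode i.2
      = ∑ i ∈ T 1, (W.εtL g * W.εsL i.1) ⊗ₜ[k] W.antipode i.2 := e1.symm
    _ = ∑ i ∈ T 1, (W.εsL i.1 * W.εtL g) ⊗ₜ[k] W.antipode i.2 := by
        exact Finset.sum_congr rfl fun i _ => by rw [COM hT i.1 g]
    _ = ∑ i ∈ T 1, (i.1 * W.εtL g) ⊗ₜ[k] W.antipode i.2 := e2

lemma YcommS (hT : IsRep W T) (f : H) :
    ∑ i ∈ T 1, W.antipode i.1 ⊗ₜ[k] (W.εsL f * i.2)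
      = ∑ i ∈ T 1, W.antipode i.1 ⊗ₜ[k] (i.2 * W.εsL f) := by
  have e1 := congrArg (⇑(TensorProduct.map W.antipode (LinearMap.mulLeft k (W.εsL f))))
    (abs_t hT)
  rw [hT 1] at e1
  simp only [map_sum, TensorProduct.map_tmul, LinearMap.mulLeft_apply] at e1
  have e2 := congrArg (⇑(TensorProduct.map W.antipode (LinearMap.mulRight k (W.εsL f))))
    (abs_t hT)
  rw [hT 1] at e2
  simp only [map_sum, TensorProduct.map_tmul, LinearMap.mulRight_apply] at e2
  calc ∑ i ∈ T 1, W.antipode i.1 ⊗ₜ[k] (W.εsL f * i.2)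
      = ∑ i ∈ T 1, W.antipode i.1 ⊗ₜ[k] (W.εsL f * W.εtL i.2) := e1.symm
    _ = ∑ i ∈ T 1, W.antipode i.1 ⊗ₜ[k] (W.εtL i.2 * W.εsL f) := by
        exact Finset.sum_congr rfl fun i _ => by rw [COM hT f i.2]
    _ = ∑ i ∈ T 1, W.antipode i.1 ⊗ₜ[k] (i.2 * W.εsL f) := e2

end

end WeakHopfSep

open TensorProduct in
/-- 𝓔 = 1₁S(1'₁) ⊗ S(1₂)1'₂ is a separability element for H_min. -/
theorem weakHopf_Hmin_separability {k H : Type*} [Field k] [Ring H] [Algebra k H]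
    (W : WeakHopf k H) :
    (LinearMap.mul' k H)
      (((TensorProduct.map LinearMap.id W.antipode) (W.comul 1)) *
        ((TensorProduct.map W.antipode LinearMap.id) (W.comul 1))) = 1 ∧
    ∀ a ∈ W.Hmin,
      (a ⊗ₜ[k] (1 : H)) *
          (((TensorProduct.map LinearMap.id W.antipode) (W.comul 1)) *
            ((TensorProduct.map W.antipode LinearMap.id) (W.comul 1))) =
        (((TensorProduct.map LinearMap.id W.antipode) (W.comul 1)) *
            ((TensorProduct.map W.antipode LinearMap.id) (W.comul 1))) *
          ((1 : H) ⊗ₜ[k] a) := by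
  classical
  obtain ⟨T, hT⟩ : ∃ T : H → Finset (H × H), WeakHopfSep.IsRep W T := by
    choose T hT using fun x : H => TensorProduct.exists_finset (W.comul x)
    exact ⟨T, hT⟩
  set X : H ⊗[k] H := (TensorProduct.map LinearMap.id W.antipode) (W.comul 1) with hXdef
  set Y : H ⊗[k] H := (TensorProduct.map W.antipode LinearMap.id) (W.comul 1) with hYdef
  have hX : X = ∑ i ∈ T 1, i.1 ⊗ₜ[k] W.antipode i.2 := by
    rw [hXdef, hT 1, map_sum]
    exact Finset.sum_congr rfl fun i _ => by simp
  have hY : Y = ∑ i ∈ T 1, W.antipode i.1 ⊗ₜ[k] i.2 := by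
    rw [hYdef, hT 1, map_sum]
    exact Finset.sum_congr rfl fun i _ => by simp
  have hX' : X = ∑ i ∈ T 1, i.1 ⊗ₜ[k] W.εsL i.2 := hX.trans (WeakHopfSep.sharp' hT)
  have hY' : Y = ∑ i ∈ T 1, W.εtL i.1 ⊗ₜ[k] i.2 := hY.trans (WeakHopfSep.sharp hT)
  constructor
  · -- separability: m(𝓔) = 1
    have e2 : (LinearMap.mul' k H) (X * Y)
        = ∑ i ∈ T 1, ∑ j ∈ T 1, (i.1 * W.εtL j.1) * (W.εsL i.2 * j.2) := by
      rw [hX', hY', Finset.sum_mul_sum, map_sum]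
      refine Finset.sum_congr rfl fun i _ => ?_
      rw [map_sum]
      exact Finset.sum_congr rfl fun j _ => by
        rw [Algebra.TensorProduct.tmul_mul_tmul, LinearMap.mul'_apply]
    have e3 : ∑ i ∈ T 1, ∑ j ∈ T 1, (i.1 * W.εtL j.1) * (W.εsL i.2 * j.2)
        = (∑ i ∈ T 1, i.1 * W.εsL i.2) * (∑ j ∈ T 1, W.εtL j.1 * j.2) := by
      rw [Finset.sum_mul_sum]
      refine Finset.sum_congr rfl fun i _ => Finset.sum_congr rfl fun j _ => ?_
      rw [mul_assoc, ← mul_assoc (W.εtL j.1), ← WeakHopfSep.COM hT i.2 j.1,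
        mul_assoc, ← mul_assoc]
    have s1 : ∑ i ∈ T 1, i.1 * W.εsL i.2 = 1 := by
      have c1 := congrArg (⇑(LinearMap.mul' k H)) (WeakHopfSep.sharp' hT)
      simp only [map_sum, LinearMap.mul'_apply] at c1
      rw [← c1, WeakHopfSep.mulS_one hT]
    have s2 : ∑ j ∈ T 1, W.εtL j.1 * j.2 = 1 := by
      have c2 := congrArg (⇑(LinearMap.mul' k H)) (WeakHopfSep.sharp hT)
      simp only [map_sum, LinearMap.mul'_apply] at c2
      rw [← c2, WeakHopfSep.Smul_one hT]
    rw [e2, e3, s1, s2, one_mul]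
  · -- the intertwiner property
    have KY : ∀ g : H, (W.εtL g ⊗ₜ[k] (1:H)) * Y = Y * ((1:H) ⊗ₜ[k] W.εtL g) := by
      intro g
      rw [hY, Finset.mul_sum, Finset.sum_mul]
      have l : ∀ i : H × H, (W.εtL g ⊗ₜ[k] (1:H)) * (W.antipode i.1 ⊗ₜ[k] i.2)
          = (W.εtL g * W.antipode i.1) ⊗ₜ[k] i.2 := fun i => by
        rw [Algebra.TensorProduct.tmul_mul_tmul, one_mul]
      have r : ∀ i : H × H, (W.antipode i.1 ⊗ₜ[k] i.2) * ((1:H) ⊗ₜ[k] W.εtL g)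
          = W.antipode i.1 ⊗ₜ[k] (i.2 * W.εtL g) := fun i => by
        rw [Algebra.TensorProduct.tmul_mul_tmul, mul_one]
      rw [Finset.sum_congr rfl fun i _ => l i, Finset.sum_congr rfl fun i _ => r i]
      exact WeakHopfSep.Tmove hT g
    have KX : ∀ f : H, (W.εsL f ⊗ₜ[k] (1:H)) * X = X * ((1:H) ⊗ₜ[k] W.εsL f) := by
      intro f
      rw [hX, Finset.mul_sum, Finset.sum_mul]
      have l : ∀ i : H × H, (W.εsL f ⊗ₜ[k] (1:H)) * (i.1 ⊗ₜ[k] W.antipode i.2)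
          = (W.εsL f * i.1) ⊗ₜ[k] W.antipode i.2 := fun i => by
        rw [Algebra.TensorProduct.tmul_mul_tmul, one_mul]
      have r : ∀ i : H × H, (i.1 ⊗ₜ[k] W.antipode i.2) * ((1:H) ⊗ₜ[k] W.εsL f)
          = i.1 ⊗ₜ[k] (W.antipode i.2 * W.εsL f) := fun i => by
        rw [Algebra.TensorProduct.tmul_mul_tmul, mul_one]
      rw [Finset.sum_congr rfl fun i _ => l i, Finset.sum_congr rfl fun i _ => r i]
      exact WeakHopfSep.Smove hT f
    have CX : ∀ g : H, (W.εtL g ⊗ₜ[k] (1:H)) * X = X * (W.εtL g ⊗ₜ[k] (1:H)) := by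
      intro g
      rw [hX, Finset.mul_sum, Finset.sum_mul]
      have l : ∀ i : H × H, (W.εtL g ⊗ₜ[k] (1:H)) * (i.1 ⊗ₜ[k] W.antipode i.2)
          = (W.εtL g * i.1) ⊗ₜ[k] W.antipode i.2 := fun i => by
        rw [Algebra.TensorProduct.tmul_mul_tmul, one_mul]
      have r : ∀ i : H × H, (i.1 ⊗ₜ[k] W.antipode i.2) * (W.εtL g ⊗ₜ[k] (1:H))
          = (i.1 * W.εtL g) ⊗ₜ[k] W.antipode i.2 := fun i => by
        rw [Algebra.TensorProduct.tmul_mul_tmul, mul_one]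
      rw [Finset.sum_congr rfl fun i _ => l i, Finset.sum_congr rfl fun i _ => r i]
      exact WeakHopfSep.XcommT hT g
    have CY : ∀ f : H, ((1:H) ⊗ₜ[k] W.εsL f) * Y = Y * ((1:H) ⊗ₜ[k] W.εsL f) := by
      intro f
      rw [hY, Finset.mul_sum, Finset.sum_mul]
      have l : ∀ i : H × H, ((1:H) ⊗ₜ[k] W.εsL f) * (W.antipode i.1 ⊗ₜ[k] i.2)
          = W.antipode i.1 ⊗ₜ[k] (W.εsL f * i.2) := fun i => by
        rw [Algebra.TensorProduct.tmul_mul_tmul, one_mul]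
      have r : ∀ i : H × H, (W.antipode i.1 ⊗ₜ[k] i.2) * ((1:H) ⊗ₜ[k] W.εsL f)
          = W.antipode i.1 ⊗ₜ[k] (i.2 * W.εsL f) := fun i => by
        rw [Algebra.TensorProduct.tmul_mul_tmul, mul_one]
      rw [Finset.sum_congr rfl fun i _ => l i, Finset.sum_congr rfl fun i _ => r i]
      exact WeakHopfSep.YcommS hT f
    intro a ha
    induction ha using Submodule.span_induction with
    | mem u hu =>
      obtain ⟨z, ⟨g, rfl⟩, y, ⟨f, rfl⟩, rfl⟩ := hu
      have split : (W.εtL g * W.εsL f) ⊗ₜ[k] (1:H)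
          = (W.εtL g ⊗ₜ[k] (1:H)) * (W.εsL f ⊗ₜ[k] (1:H)) := by
        rw [Algebra.TensorProduct.tmul_mul_tmul, mul_one]
      have split2 : ((1:H) ⊗ₜ[k] (W.εtL g * W.εsL f))
          = ((1:H) ⊗ₜ[k] W.εtL g) * ((1:H) ⊗ₜ[k] W.εsL f) := by
        rw [Algebra.TensorProduct.tmul_mul_tmul, mul_one]
      have hy : (W.εsL f ⊗ₜ[k] (1:H)) * (X * Y) = (X * Y) * ((1:H) ⊗ₜ[k] W.εsL f) := by
        calc (W.εsL f ⊗ₜ[k] (1:H)) * (X * Y)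
            = ((W.εsL f ⊗ₜ[k] (1:H)) * X) * Y := by rw [mul_assoc]
          _ = (X * ((1:H) ⊗ₜ[k] W.εsL f)) * Y := by rw [KX f]
          _ = X * (((1:H) ⊗ₜ[k] W.εsL f) * Y) := by rw [mul_assoc]
          _ = X * (Y * ((1:H) ⊗ₜ[k] W.εsL f)) := by rw [CY f]
          _ = (X * Y) * ((1:H) ⊗ₜ[k] W.εsL f) := by rw [mul_assoc]
      have hz : (W.εtL g ⊗ₜ[k] (1:H)) * (X * Y) = (X * Y) * ((1:H) ⊗ₜ[k] W.εtL g) := by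
        calc (W.εtL g ⊗ₜ[k] (1:H)) * (X * Y)
            = ((W.εtL g ⊗ₜ[k] (1:H)) * X) * Y := by rw [mul_assoc]
          _ = (X * (W.εtL g ⊗ₜ[k] (1:H))) * Y := by rw [CX g]
          _ = X * ((W.εtL g ⊗ₜ[k] (1:H)) * Y) := by rw [mul_assoc]
          _ = X * (Y * ((1:H) ⊗ₜ[k] W.εtL g)) := by rw [KY g]
          _ = (X * Y) * ((1:H) ⊗ₜ[k] W.εtL g) := by rw [mul_assoc]
      calc (W.εtL g * W.εsL f) ⊗ₜ[k] (1:H) * (X * Y)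
          = (W.εtL g ⊗ₜ[k] (1:H)) * ((W.εsL f ⊗ₜ[k] (1:H)) * (X * Y)) := by
            rw [split, mul_assoc]
        _ = (W.εtL g ⊗ₜ[k] (1:H)) * ((X * Y) * ((1:H) ⊗ₜ[k] W.εsL f)) := by rw [hy]
        _ = ((W.εtL g ⊗ₜ[k] (1:H)) * (X * Y)) * ((1:H) ⊗ₜ[k] W.εsL f) := by
            rw [← mul_assoc]
        _ = ((X * Y) * ((1:H) ⊗ₜ[k] W.εtL g)) * ((1:H) ⊗ₜ[k] W.εsL f) := by rw [hz]
        _ = (X * Y) * ((1:H) ⊗ₜ[k] (W.εtL g * W.εsL f)) := by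
            rw [split2, mul_assoc]
    | zero => simp
    | add u v _ _ hu hv => rw [add_tmul, tmul_add, add_mul, mul_add, hu, hv]
    | smul c u _ hu =>
      rw [← smul_tmul', tmul_smul, smul_mul_assoc, mul_smul_comm, hu]
end

section
/- Let H be a finite-dimensional weak Hopf algebra, γ a group-like element of H*, and consider the right H-module H_s^γ with action y·h := ⟨γ, yh1₁⟩S(1₂). The map T ↦ T(1) is an algebra isomorphism from the algebra of H-module endomorphisms of H_s^γ to Z(H) ∩ H_s. -/
open TensorProduct

set_option synthInstance.maxHeartbeats 400000
set_option maxHeartbeats 1000000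

section Aux

open TensorProduct LinearMap

variable {k H : Type*} [Field k] [Ring H] [Algebra k H] (W : WeakHopf k H)

private lemma exists_rep (t : H ⊗[k] H) :
    ∃ (n : ℕ) (a b : Fin n → H), t = ∑ i, a i ⊗ₜ[k] b i := by
  induction t with
  | zero => exact ⟨0, ![], ![], by simp⟩
  | tmul x y => exact ⟨1, ![x], ![y], by simp⟩
  | add u v hu hv =>
    obtain ⟨n, a, b, rfl⟩ := hu
    obtain ⟨m, c, d, rfl⟩ := hv
    refine ⟨n + m, Fin.append a c, Fin.append b d, ?_⟩
    rw [Fin.sum_univ_add]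
    simp [Fin.append_left, Fin.append_right]

variable {n : ℕ} {a b : Fin n → H}

private lemma εsL_eq (hab : W.comul 1 = ∑ i, a i ⊗ₜ[k] b i) (h : H) :
    W.εsL h = ∑ i, W.counit (h * b i) • a i := by
  simp [WeakHopf.εsL, hab, LinearMap.mul'_apply]

private lemma εtL_eq (hab : W.comul 1 = ∑ i, a i ⊗ₜ[k] b i) (h : H) :
    W.εtL h = ∑ i, W.counit (a i * h) • b i := by
  simp [WeakHopf.εtL, hab, LinearMap.mul'_apply]

private lemma act_eq (hab : W.comul 1 = ∑ i, a i ⊗ₜ[k] b i) (γ : H →ₗ[k] k) (y h : H) :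
    W.act γ y h = ∑ i, γ (y * h * a i) • W.antipode (b i) := by
  simp [WeakHopf.act, hab, mul_assoc]

end Aux
section Aux2

open TensorProduct LinearMap

set_option synthInstance.maxHeartbeats 400000
set_option maxHeartbeats 1000000

variable {k H : Type*} [Field k] [Ring H] [Algebra k H] (W : WeakHopf k H)
variable {n : ℕ} {a b : Fin n → H}

private lemma formA (hab : W.comul 1 = ∑ i, a i ⊗ₜ[k] b i) :
    (TensorProduct.map W.comul LinearMap.id) (W.comul 1) =
      ∑ i, ∑ j, (a i ⊗ₜ[k] (b i * a j)) ⊗ₜ[k] b j := by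
  rw [W.weak_unit_left]
  rw [hab]
  simp only [tmul_sum, sum_tmul, map_sum, assoc_symm_tmul, Finset.sum_mul, Finset.mul_sum,
    Algebra.TensorProduct.tmul_mul_tmul, mul_one, one_mul]
  rw [Finset.sum_comm]

private lemma formB (hab : W.comul 1 = ∑ i, a i ⊗ₜ[k] b i) :
    (TensorProduct.map W.comul LinearMap.id) (W.comul 1) =
      ∑ i, ∑ j, (a j ⊗ₜ[k] (a i * b j)) ⊗ₜ[k] b i := by
  rw [W.weak_unit_right]
  rw [hab]
  simp only [tmul_sum, sum_tmul, map_sum, assoc_symm_tmul, Finset.sum_mul, Finset.mul_sum,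
    Algebra.TensorProduct.tmul_mul_tmul, mul_one, one_mul]
  rw [Finset.sum_comm]

private lemma formC (hab : W.comul 1 = ∑ i, a i ⊗ₜ[k] b i) :
    (TensorProduct.map LinearMap.id W.comul) (W.comul 1) =
      ∑ i, ∑ j, a i ⊗ₜ[k] ((b i * a j) ⊗ₜ[k] b j) := by
  rw [← W.coassoc 1, formA W hab]
  simp only [map_sum, assoc_tmul]

private lemma sum_counit_b (hab : W.comul 1 = ∑ i, a i ⊗ₜ[k] b i) :
    ∑ i, W.counit (a i) • b i = 1 := by
  have := W.counit_comul 1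
  rw [hab] at this
  simpa using this

private lemma sum_counit_a (hab : W.comul 1 = ∑ i, a i ⊗ₜ[k] b i) :
    ∑ i, W.counit (b i) • a i = 1 := by
  have := W.comul_counit 1
  rw [hab] at this
  simpa using this

private lemma sum_a_S_b (hab : W.comul 1 = ∑ i, a i ⊗ₜ[k] b i) :
    ∑ i, a i * W.antipode (b i) = 1 := by
  have := W.antipode_right 1
  rw [hab] at this
  simp only [map_sum, TensorProduct.map_tmul, LinearMap.mul'_apply, id_coe, id_eq,
    lid_tmul, mulRight_apply, coe_comp, Function.comp_apply, mul_one] at this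
  rw [this]
  exact sum_counit_b W hab

end Aux2
section Aux3

open TensorProduct LinearMap

set_option synthInstance.maxHeartbeats 400000
set_option maxHeartbeats 1000000

variable {k H : Type*} [Field k] [Ring H] [Algebra k H] (W : WeakHopf k H)
variable {n : ℕ} {a b : Fin n → H}

private lemma star2 : W.comul 1 * W.comul 1 = W.comul 1 := by
  rw [← W.comul_mul, one_mul]

private lemma star7 (hab : W.comul 1 = ∑ i, a i ⊗ₜ[k] b i) :
    ∑ i, a i ⊗ₜ[k] W.εtL (b i) = W.comul 1 := by
  have e := congrArg (TensorProduct.map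
      ((TensorProduct.rid k H).toLinearMap ∘ₗ TensorProduct.map LinearMap.id W.counit)
      (LinearMap.id : H →ₗ[k] H)) (formB W hab)
  have lhs : (TensorProduct.map
      ((TensorProduct.rid k H).toLinearMap ∘ₗ TensorProduct.map LinearMap.id W.counit)
      (LinearMap.id : H →ₗ[k] H)) ((TensorProduct.map W.comul LinearMap.id) (W.comul 1)) =
      W.comul 1 := by
    conv_lhs => rw [hab]
    simp only [map_sum, TensorProduct.map_tmul, LinearMap.coe_comp, Function.comp_apply,
      LinearMap.id_coe, id_eq, LinearEquiv.coe_coe]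
    have hc : ∀ i : Fin n, (TensorProduct.rid k H)
        ((TensorProduct.map LinearMap.id W.counit) (W.comul (a i))) = a i :=
      fun i => W.comul_counit (a i)
    simp only [hc]
    exact hab.symm
  rw [lhs] at e
  rw [e]
  simp only [map_sum, TensorProduct.map_tmul, LinearMap.coe_comp, Function.comp_apply,
    LinearMap.id_coe, id_eq, LinearEquiv.coe_coe, rid_tmul, LinearMap.mul'_apply,
    εtL_eq W hab, tmul_sum, tmul_smul, smul_tmul']
  rw [Finset.sum_comm]

private lemma I14 (hab : W.comul 1 = ∑ i, a i ⊗ₜ[k] b i) (u g : H) :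
    W.counit (W.εsL u * g) = W.counit (u * g) := by
  have e := W.weak_counit_right u 1 g
  rw [mul_one, hab] at e
  simp only [map_sum, comm_tmul, TensorProduct.map_tmul, LinearMap.coe_comp,
    Function.comp_apply, LinearMap.mulLeft_apply, LinearMap.mulRight_apply, lid_tmul,
    smul_eq_mul] at e
  rw [εsL_eq W hab]
  simp only [Finset.sum_mul, map_sum, smul_mul_assoc, map_smul, smul_eq_mul]
  exact e.symm

private lemma L1 (hab : W.comul 1 = ∑ i, a i ⊗ₜ[k] b i) (h : H) :
    W.εsL (W.εsL h) = W.εsL h := by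
  conv_lhs => rw [εsL_eq W hab]
  conv_rhs => rw [εsL_eq W hab]
  exact Finset.sum_congr rfl fun i _ => by rw [I14 W hab]

private lemma L5 (hab : W.comul 1 = ∑ i, a i ⊗ₜ[k] b i) (g u : H) :
    W.εsL g * W.εtL u = W.εtL u * W.εsL g := by
  have e := congrArg ((TensorProduct.rid k H).toLinearMap ∘ₗ TensorProduct.map
      ((TensorProduct.lid k H).toLinearMap ∘ₗ
        TensorProduct.map (W.counit ∘ₗ LinearMap.mulRight k u) LinearMap.id)
      (W.counit ∘ₗ LinearMap.mulLeft k g)) ((formA W hab).symm.trans (formB W hab))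
  simp only [map_sum, TensorProduct.map_tmul, LinearMap.coe_comp, Function.comp_apply,
    LinearMap.id_coe, id_eq, LinearEquiv.coe_coe, lid_tmul, rid_tmul,
    LinearMap.mulLeft_apply, LinearMap.mulRight_apply, smul_smul] at e
  rw [εsL_eq W hab, εtL_eq W hab, Finset.sum_mul_sum, Finset.sum_mul_sum]
  simp only [smul_mul_assoc, mul_smul_comm, smul_smul]
  rw [e]
  exact Finset.sum_congr rfl fun i _ => Finset.sum_congr rfl fun j _ => by rw [mul_comm]

end Aux3
section Aux4

open TensorProduct LinearMap

set_option synthInstance.maxHeartbeats 400000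
set_option maxHeartbeats 1000000

variable {k H : Type*} [Field k] [Ring H] [Algebra k H] (W : WeakHopf k H)
variable {n : ℕ} {a b : Fin n → H}

private lemma star6 (hab : W.comul 1 = ∑ i, a i ⊗ₜ[k] b i) (h : H) :
    W.comul (W.εsL h) = ((1:H) ⊗ₜ[k] W.εsL h) * W.comul 1 := by
  have e := congrArg ((TensorProduct.rid k (H ⊗[k] H)).toLinearMap ∘ₗ TensorProduct.map
      (LinearMap.id : H ⊗[k] H →ₗ[k] H ⊗[k] H) (W.counit ∘ₗ LinearMap.mulLeft k h))
      (formB W hab)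
  have lhs : ((TensorProduct.rid k (H ⊗[k] H)).toLinearMap ∘ₗ TensorProduct.map
      (LinearMap.id : H ⊗[k] H →ₗ[k] H ⊗[k] H) (W.counit ∘ₗ LinearMap.mulLeft k h))
      ((TensorProduct.map W.comul LinearMap.id) (W.comul 1)) = W.comul (W.εsL h) := by
    conv_lhs => rw [hab]
    simp only [map_sum, TensorProduct.map_tmul, LinearMap.coe_comp, Function.comp_apply,
      LinearMap.id_coe, id_eq, LinearEquiv.coe_coe, rid_tmul, LinearMap.mulLeft_apply]
    rw [εsL_eq W hab, map_sum]
    exact Finset.sum_congr rfl fun i _ => by rw [map_smul]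
  rw [lhs] at e
  rw [e, hab]
  simp only [map_sum, TensorProduct.map_tmul, LinearMap.coe_comp, Function.comp_apply,
    LinearMap.id_coe, id_eq, LinearEquiv.coe_coe, rid_tmul, LinearMap.mulLeft_apply,
    Finset.mul_sum, Algebra.TensorProduct.tmul_mul_tmul, one_mul, εsL_eq W hab,
    Finset.sum_mul, smul_mul_assoc, tmul_smul, smul_tmul', tmul_sum]
  rw [Finset.sum_comm]

private lemma star4 (hab : W.comul 1 = ∑ i, a i ⊗ₜ[k] b i) (u : H) :
    W.comul (W.εtL u) = (W.εtL u ⊗ₜ[k] (1:H)) * W.comul 1 := by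
  have e := congrArg ((TensorProduct.lid k (H ⊗[k] H)).toLinearMap ∘ₗ TensorProduct.map
      (W.counit ∘ₗ LinearMap.mulRight k u) (LinearMap.id : H ⊗[k] H →ₗ[k] H ⊗[k] H))
      (formC W hab)
  have lhs : ((TensorProduct.lid k (H ⊗[k] H)).toLinearMap ∘ₗ TensorProduct.map
      (W.counit ∘ₗ LinearMap.mulRight k u) (LinearMap.id : H ⊗[k] H →ₗ[k] H ⊗[k] H))
      ((TensorProduct.map LinearMap.id W.comul) (W.comul 1)) = W.comul (W.εtL u) := by
    conv_lhs => rw [hab]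
    simp only [map_sum, TensorProduct.map_tmul, LinearMap.coe_comp, Function.comp_apply,
      LinearMap.id_coe, id_eq, LinearEquiv.coe_coe, lid_tmul, LinearMap.mulRight_apply]
    rw [εtL_eq W hab, map_sum]
    exact Finset.sum_congr rfl fun i _ => by rw [map_smul]
  rw [lhs] at e
  rw [e, hab]
  simp only [map_sum, TensorProduct.map_tmul, LinearMap.coe_comp, Function.comp_apply,
    LinearMap.id_coe, id_eq, LinearEquiv.coe_coe, lid_tmul, LinearMap.mulRight_apply,
    Finset.mul_sum, Finset.sum_mul, Algebra.TensorProduct.tmul_mul_tmul, mul_one,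
    εtL_eq W hab, smul_mul_assoc, smul_tmul', sum_tmul, one_mul]
  rw [Finset.sum_comm]

end Aux4
section Aux5

open TensorProduct LinearMap

set_option synthInstance.maxHeartbeats 400000
set_option maxHeartbeats 1000000

variable {k H : Type*} [Field k] [Ring H] [Algebra k H] (W : WeakHopf k H)

private lemma comul_mem {y : H} (hy : y ∈ LinearMap.range W.εsL) :
    W.comul y = ((1:H) ⊗ₜ[k] y) * W.comul 1 := by
  obtain ⟨ξ, rfl⟩ := hy
  obtain ⟨n, a, b, hab⟩ := exists_rep (W.comul 1)
  exact star6 W hab ξ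

private lemma charS {v : H} (hv : W.comul v = ((1:H) ⊗ₜ[k] v) * W.comul 1) :
    v ∈ LinearMap.range W.εsL := by
  obtain ⟨n, a, b, hab⟩ := exists_rep (W.comul 1)
  have e := W.comul_counit v
  rw [hv, hab] at e
  simp only [Finset.mul_sum, Algebra.TensorProduct.tmul_mul_tmul, one_mul, map_sum,
    TensorProduct.map_tmul, LinearMap.id_coe, id_eq, rid_tmul] at e
  refine ⟨v, ?_⟩
  rw [εsL_eq W hab]
  exact e

private lemma L5' {y : H} (hy : y ∈ LinearMap.range W.εsL) :
    ((1:H) ⊗ₜ[k] y) * W.comul 1 = W.comul 1 * ((1:H) ⊗ₜ[k] y) := by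
  obtain ⟨n, a, b, hab⟩ := exists_rep (W.comul 1)
  obtain ⟨ξ, rfl⟩ := hy
  set F : H →ₗ[k] H := LinearMap.mulLeft k (W.εsL ξ) - LinearMap.mulRight k (W.εsL ξ) with hF
  have hFt : ∀ u, F (W.εtL u) = 0 := by
    intro u
    simp only [hF, LinearMap.sub_apply, LinearMap.mulLeft_apply, LinearMap.mulRight_apply]
    rw [L5 W hab ξ u, sub_self]
  have e := congrArg (TensorProduct.map (LinearMap.id : H →ₗ[k] H) F) (star7 W hab)
  rw [hab] at e
  simp only [map_sum, TensorProduct.map_tmul, LinearMap.id_coe, id_eq, hFt,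
    tmul_zero, Finset.sum_const_zero] at e
  simp only [hF, LinearMap.sub_apply, LinearMap.mulLeft_apply, LinearMap.mulRight_apply,
    tmul_sub] at e
  rw [hab]
  simp only [Finset.mul_sum, Finset.sum_mul, Algebra.TensorProduct.tmul_mul_tmul,
    one_mul, mul_one]
  rw [← sub_eq_zero, ← Finset.sum_sub_distrib]
  exact e.symm

private lemma N3 {x y : H} (hx : x ∈ LinearMap.range W.εsL)
    (hy : y ∈ LinearMap.range W.εsL) : x * y ∈ LinearMap.range W.εsL := by
  apply charS W
  rw [W.comul_mul, comul_mem W hx, comul_mem W hy, mul_assoc,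
    ← mul_assoc (W.comul 1), ← L5' W hy, mul_assoc, star2,
    ← mul_assoc, Algebra.TensorProduct.tmul_mul_tmul, one_mul]

private lemma skey (u : H) : W.antipode (W.εtL u) = W.εsL (W.εtL u) := by
  obtain ⟨n, a, b, hab⟩ := exists_rep (W.comul 1)
  set t := W.εtL u with ht
  have h2 : W.comul t = ∑ i, (t * a i) ⊗ₜ[k] b i := by
    rw [star4 W hab u, hab]
    simp only [Finset.mul_sum, Algebra.TensorProduct.tmul_mul_tmul, mul_one, one_mul, ← ht]
  -- joint form of Δ(b i)
  have hjoint : ∑ i, a i ⊗ₜ[k] W.comul (b i) = ∑ i, ∑ j, a i ⊗ₜ[k] ((b i * a j) ⊗ₜ[k] b j) := by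
    have := formC W hab
    rw [hab] at this
    simpa only [map_sum, TensorProduct.map_tmul, LinearMap.id_coe, id_eq] using this
  have h3 : (TensorProduct.map LinearMap.id W.comul) (W.comul t) =
      ∑ i, ∑ j, (t * a i) ⊗ₜ[k] ((b i * a j) ⊗ₜ[k] b j) := by
    rw [h2]
    have e := congrArg (TensorProduct.map (LinearMap.mulLeft k t)
      (LinearMap.id : H ⊗[k] H →ₗ[k] H ⊗[k] H)) hjoint
    simp only [map_sum, TensorProduct.map_tmul, LinearMap.id_coe, id_eq,
      LinearMap.mulLeft_apply] at e
    simpa only [map_sum, TensorProduct.map_tmul, LinearMap.id_coe, id_eq] using e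
  have h4 : (TensorProduct.map W.comul LinearMap.id) (W.comul t) =
      ∑ i, ∑ j, ((t * a i) ⊗ₜ[k] (b i * a j)) ⊗ₜ[k] b j := by
    have e := W.coassoc t
    have e2 := congrArg (TensorProduct.assoc k H H H).symm e
    rw [LinearEquiv.symm_apply_apply, h3] at e2
    rw [e2]
    simp only [map_sum, assoc_symm_tmul]
  have h5 := W.antipode_mid t
  rw [h4] at h5
  simp only [map_sum, TensorProduct.map_tmul, LinearMap.coe_comp, Function.comp_apply,
    LinearMap.id_coe, id_eq, LinearMap.mul'_apply] at h5
  have h6 : ∀ i : Fin n, ∑ j, W.antipode (t * a i) * (b i * a j) * W.antipode (b j) =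
      W.antipode (t * a i) * b i := by
    intro i
    have : ∀ j : Fin n, W.antipode (t * a i) * (b i * a j) * W.antipode (b j) =
        (W.antipode (t * a i) * b i) * (a j * W.antipode (b j)) := by
      intro j; rw [mul_assoc, mul_assoc, mul_assoc]
    rw [Finset.sum_congr rfl fun j _ => this j, ← Finset.mul_sum, sum_a_S_b W hab, mul_one]
  rw [Finset.sum_congr rfl fun i _ => h6 i] at h5
  have h7 := W.antipode_left t
  rw [h2, hab] at h7
  simp only [map_sum, TensorProduct.map_tmul, LinearMap.coe_comp, Function.comp_apply,
    LinearMap.id_coe, id_eq, LinearMap.mul'_apply, rid_tmul, LinearMap.mulLeft_apply] at h7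
  rw [← h5, h7, εsL_eq W hab]

end Aux5
section Aux6

open TensorProduct LinearMap

set_option synthInstance.maxHeartbeats 400000
set_option maxHeartbeats 1000000

variable {k H : Type*} [Field k] [Ring H] [Algebra k H] (W : WeakHopf k H)
variable {n : ℕ} {a b : Fin n → H} (γ : H →ₗ[k] k)

private lemma G2 (hab : W.comul 1 = ∑ i, a i ⊗ₜ[k] b i)
    (h2 : ∀ h g : H, γ (h * g) =
      (TensorProduct.lid k k)
        ((TensorProduct.map (γ ∘ₗ LinearMap.mulLeft k h)
          (γ ∘ₗ LinearMap.mulRight k g ∘ₗ W.antipode)) (W.comul 1)))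
    (h g : H) :
    γ (h * g) = ∑ i, γ (h * a i) * γ (W.antipode (b i) * g) := by
  rw [h2 h g, hab]
  simp only [map_sum, TensorProduct.map_tmul, LinearMap.coe_comp, Function.comp_apply,
    LinearMap.mulLeft_apply, LinearMap.mulRight_apply, lid_tmul, smul_eq_mul]

private lemma G3 (hab : W.comul 1 = ∑ i, a i ⊗ₜ[k] b i)
    (h3 : ∀ h g : H, γ (h * g) =
      (TensorProduct.lid k k)
        ((TensorProduct.map (γ ∘ₗ LinearMap.mulLeft k h ∘ₗ W.antipode)
          (γ ∘ₗ LinearMap.mulRight k g)) (W.comul 1)))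
    (h g : H) :
    γ (h * g) = ∑ i, γ (h * W.antipode (a i)) * γ (b i * g) := by
  rw [h3 h g, hab]
  simp only [map_sum, TensorProduct.map_tmul, LinearMap.coe_comp, Function.comp_apply,
    LinearMap.mulLeft_apply, LinearMap.mulRight_apply, lid_tmul, smul_eq_mul]

private lemma act_one (y h : H) : W.act γ y h = W.act γ 1 (y * h) := by
  simp [WeakHopf.act, one_mul]

private lemma I2 (hab : W.comul 1 = ∑ i, a i ⊗ₜ[k] b i)
    (h2 : ∀ h g : H, γ (h * g) =
      (TensorProduct.lid k k)
        ((TensorProduct.map (γ ∘ₗ LinearMap.mulLeft k h)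
          (γ ∘ₗ LinearMap.mulRight k g ∘ₗ W.antipode)) (W.comul 1)))
    (w g : H) :
    γ (W.act γ 1 w * g) = γ (w * g) := by
  rw [act_eq W hab γ 1 w]
  simp only [one_mul, Finset.sum_mul, smul_mul_assoc, map_sum, map_smul, smul_eq_mul]
  exact (G2 W γ hab h2 w g).symm

private lemma N1 (hab : W.comul 1 = ∑ i, a i ⊗ₜ[k] b i) (w : H) :
    W.act γ 1 w ∈ LinearMap.range W.εsL := by
  refine ⟨∑ i, γ (1 * w * a i) • W.εtL (b i), ?_⟩
  have e := congrArg (((TensorProduct.lid k H).toLinearMap ∘ₗ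
    TensorProduct.map (γ ∘ₗ LinearMap.mulLeft k (1 * w)) W.antipode)) (star7 W hab)
  simp only [map_sum, TensorProduct.map_tmul, LinearMap.coe_comp, Function.comp_apply,
    LinearMap.mulLeft_apply, LinearEquiv.coe_coe, lid_tmul] at e
  rw [map_sum]
  simp only [map_smul]
  calc ∑ i, γ (1 * w * a i) • W.εsL (W.εtL (b i))
      = ∑ i, γ (1 * w * a i) • W.antipode (W.εtL (b i)) := by
        exact Finset.sum_congr rfl fun i _ => by rw [skey]
    _ = W.act γ 1 w := by
        rw [e]
        simp only [WeakHopf.act, LinearEquiv.coe_coe]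

private lemma L3 (β : H →ₗ[k] k) (hβγ : W.dualMul β γ = W.counit)
    {y : H} (hy : y ∈ LinearMap.range W.εsL) (h0 : ∀ g : H, γ (y * g) = 0) :
    y = 0 := by
  obtain ⟨nn, a, b, hab⟩ := exists_rep (W.comul 1)
  have hce : ∀ g : H, W.counit (y * g) = 0 := by
    intro g
    have hΔ : W.comul (y * g) = ((1:H) ⊗ₜ[k] y) * W.comul g := by
      rw [W.comul_mul, comul_mem W hy, mul_assoc, ← W.comul_mul, one_mul]
    obtain ⟨m, c, d, hcd⟩ := exists_rep (W.comul g)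
    rw [← hβγ]
    show (TensorProduct.lid k k) ((TensorProduct.map β γ) (W.comul (y * g))) = 0
    rw [hΔ, hcd]
    simp only [Finset.mul_sum, Algebra.TensorProduct.tmul_mul_tmul, one_mul, map_sum,
      TensorProduct.map_tmul, lid_tmul, smul_eq_mul]
    have : ∀ i : Fin m, β (c i) * γ (y * d i) = 0 := fun i => by rw [h0, mul_zero]
    simp only [this, Finset.sum_const_zero]
  have hyy : W.εsL y = y := by
    obtain ⟨ξ, rfl⟩ := hy
    exact L1 W hab ξ
  rw [← hyy, εsL_eq W hab]
  simp only [hce, zero_smul, Finset.sum_const_zero]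

end Aux6
section Aux7

open TensorProduct LinearMap

set_option synthInstance.maxHeartbeats 400000
set_option maxHeartbeats 1000000

variable {k H : Type*} [Field k] [Ring H] [Algebra k H] (W : WeakHopf k H)
variable (γ β : H →ₗ[k] k)

private lemma N2 (hβγ : W.dualMul β γ = W.counit)
    (h2 : ∀ h g : H, γ (h * g) =
      (TensorProduct.lid k k)
        ((TensorProduct.map (γ ∘ₗ LinearMap.mulLeft k h)
          (γ ∘ₗ LinearMap.mulRight k g ∘ₗ W.antipode)) (W.comul 1)))
    {y : H} (hy : y ∈ LinearMap.range W.εsL) :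
    W.act γ 1 y = y := by
  obtain ⟨n, a, b, hab⟩ := exists_rep (W.comul 1)
  have hd : W.act γ 1 y - y = 0 := by
    refine L3 W γ β hβγ (Submodule.sub_mem _ (N1 W γ hab y) hy) fun g => ?_
    rw [sub_mul, map_sub, I2 W γ hab h2 y g, sub_self]
  exact sub_eq_zero.mp hd

private lemma I5 (hβγ : W.dualMul β γ = W.counit)
    (h2 : ∀ h g : H, γ (h * g) =
      (TensorProduct.lid k k)
        ((TensorProduct.map (γ ∘ₗ LinearMap.mulLeft k h)
          (γ ∘ₗ LinearMap.mulRight k g ∘ₗ W.antipode)) (W.comul 1)))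
    {y : H} (hy : y ∈ LinearMap.range W.εsL) (w : H) :
    W.act γ 1 (w * y) = W.act γ 1 w * y := by
  obtain ⟨n, a, b, hab⟩ := exists_rep (W.comul 1)
  have hd : W.act γ 1 (w * y) - W.act γ 1 w * y = 0 := by
    refine L3 W γ β hβγ (Submodule.sub_mem _ (N1 W γ hab (w * y))
      (N3 W (N1 W γ hab w) hy)) fun g => ?_
    rw [sub_mul, map_sub, I2 W γ hab h2 (w * y) g, mul_assoc, mul_assoc,
      I2 W γ hab h2 w (y * g), ← mul_assoc, sub_self]
  exact sub_eq_zero.mp hd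

private lemma lamSurj
    (h3 : ∀ h g : H, γ (h * g) =
      (TensorProduct.lid k k)
        ((TensorProduct.map (γ ∘ₗ LinearMap.mulLeft k h ∘ₗ W.antipode)
          (γ ∘ₗ LinearMap.mulRight k g)) (W.comul 1)))
    (v : H) :
    ∃ t : H, t ∈ LinearMap.range W.εtL ∧ W.act γ 1 t = W.act γ 1 v := by
  obtain ⟨n, a, b, hab⟩ := exists_rep (W.comul 1)
  refine ⟨∑ i, γ (v * W.antipode (a i)) • b i, ?_, ?_⟩
  · refine ⟨∑ i, γ (v * W.antipode (a i)) • b i, ?_⟩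
    have e := congrArg (((TensorProduct.lid k H).toLinearMap ∘ₗ
      TensorProduct.map (γ ∘ₗ LinearMap.mulLeft k v ∘ₗ W.antipode) LinearMap.id))
      (star7 W hab)
    rw [hab] at e
    simp only [map_sum, TensorProduct.map_tmul, LinearMap.coe_comp, Function.comp_apply,
      LinearMap.mulLeft_apply, LinearEquiv.coe_coe, lid_tmul, LinearMap.id_coe, id_eq] at e
    rw [map_sum]
    simp only [map_smul]
    exact e
  · rw [act_eq W hab γ 1 _, act_eq W hab γ 1 v]
    refine Finset.sum_congr rfl fun j _ => ?_
    congr 1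
    rw [one_mul, one_mul, Finset.sum_mul, map_sum]
    simp only [smul_mul_assoc, map_smul, smul_eq_mul]
    exact (G3 W γ hab h3 v (a j)).symm

private lemma Rinj (hβγ : W.dualMul β γ = W.counit) (u v : H)
    (huv : (TensorProduct.rid k H) ((TensorProduct.map LinearMap.id γ) (W.comul u)) =
      (TensorProduct.rid k H) ((TensorProduct.map LinearMap.id γ) (W.comul v))) :
    u = v := by
  have key : ∀ h : H, (TensorProduct.rid k H) ((TensorProduct.map LinearMap.id β) (W.comul
      ((TensorProduct.rid k H) ((TensorProduct.map LinearMap.id γ) (W.comul h))))) = h := by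
    intro h
    have c1 : ∀ t : H ⊗[k] H,
        W.comul ((TensorProduct.rid k H) ((TensorProduct.map LinearMap.id γ) t)) =
        (TensorProduct.rid k (H ⊗[k] H)) ((TensorProduct.map W.comul γ) t) := by
      intro t
      induction t with
      | zero => simp
      | tmul x y =>
        simp only [TensorProduct.map_tmul, LinearMap.id_coe, id_eq, rid_tmul, map_smul]
      | add s r hs hr => simp only [map_add, hs, hr]
    rw [c1]
    have c15 : (TensorProduct.map W.comul γ) (W.comul h) =
        (TensorProduct.map LinearMap.id γ)
          ((TensorProduct.assoc k H H H).symm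
            ((TensorProduct.map LinearMap.id W.comul) (W.comul h))) := by
      rw [← W.coassoc h, LinearEquiv.symm_apply_apply]
      have : (TensorProduct.map (LinearMap.id : H ⊗[k] H →ₗ[k] H ⊗[k] H) γ) ∘ₗ
          (TensorProduct.map W.comul (LinearMap.id : H →ₗ[k] H)) =
          TensorProduct.map W.comul γ := by
        rw [← TensorProduct.map_comp, LinearMap.id_comp, LinearMap.comp_id]
      rw [← this]; rfl
    rw [c15]
    have c2 : ∀ w : H ⊗[k] (H ⊗[k] H),
        (TensorProduct.rid k H) ((TensorProduct.map LinearMap.id β)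
          ((TensorProduct.rid k (H ⊗[k] H)) ((TensorProduct.map LinearMap.id γ)
            ((TensorProduct.assoc k H H H).symm w)))) =
        (TensorProduct.rid k H) ((TensorProduct.map LinearMap.id
          ((TensorProduct.lid k k).toLinearMap ∘ₗ TensorProduct.map β γ)) w) := by
      intro w
      induction w with
      | zero => simp
      | tmul x s =>
        induction s with
        | zero => simp
        | tmul y z =>
          simp only [assoc_symm_tmul, TensorProduct.map_tmul, LinearMap.id_coe, id_eq,
            rid_tmul, map_smul, LinearMap.coe_comp, Function.comp_apply,
            LinearEquiv.coe_coe, lid_tmul, smul_eq_mul, smul_smul]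
          rw [mul_comm]
        | add s1 s2 hs1 hs2 =>
          simp only [tmul_add, map_add, hs1, hs2]
      | add w1 w2 hw1 hw2 => simp only [map_add, hw1, hw2]
    rw [c2]
    have c3 : (TensorProduct.map (LinearMap.id : H →ₗ[k] H)
        ((TensorProduct.lid k k).toLinearMap ∘ₗ TensorProduct.map β γ))
        ((TensorProduct.map LinearMap.id W.comul) (W.comul h)) =
        (TensorProduct.map LinearMap.id W.counit) (W.comul h) := by
      have : (TensorProduct.map (LinearMap.id : H →ₗ[k] H)
          ((TensorProduct.lid k k).toLinearMap ∘ₗ TensorProduct.map β γ)) ∘ₗ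
          (TensorProduct.map (LinearMap.id : H →ₗ[k] H) W.comul) =
          TensorProduct.map LinearMap.id (W.dualMul β γ) := by
        rw [← TensorProduct.map_comp, LinearMap.id_comp]
        rfl
      rw [← hβγ, ← this]
      rfl
    rw [c3, W.comul_counit]
  calc u = _ := (key u).symm
    _ = _ := by rw [huv]
    _ = v := key v
end Aux7
section Aux8

open TensorProduct LinearMap

set_option synthInstance.maxHeartbeats 400000
set_option maxHeartbeats 1000000

variable {k H : Type*} [Field k] [Ring H] [Algebra k H] (W : WeakHopf k H)
variable (γ β : H →ₗ[k] k)

private lemma L5mem {x t : H} (hx : x ∈ LinearMap.range W.εsL)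
    (ht : t ∈ LinearMap.range W.εtL) : x * t = t * x := by
  obtain ⟨n, a, b, hab⟩ := exists_rep (W.comul 1)
  obtain ⟨ξ, rfl⟩ := hx
  obtain ⟨η, rfl⟩ := ht
  exact L5 W hab ξ η

private lemma central (hβγ : W.dualMul β γ = W.counit)
    (h2 : ∀ h g : H, γ (h * g) =
      (TensorProduct.lid k k)
        ((TensorProduct.map (γ ∘ₗ LinearMap.mulLeft k h)
          (γ ∘ₗ LinearMap.mulRight k g ∘ₗ W.antipode)) (W.comul 1)))
    {x : H} (hx : x ∈ LinearMap.range W.εsL)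
    (hcomm : ∀ y ∈ LinearMap.range W.εsL, x * y = y * x)
    (hstar : ∀ w : H, W.act γ 1 (x * w) = x * W.act γ 1 w)
    (h : H) : x * h = h * x := by
  obtain ⟨n, a, b, hab⟩ := exists_rep (W.comul 1)
  -- the key commutation of γ-functionals
  have kc : ∀ v : H, γ (x * v) = γ (v * x) := by
    intro v
    have e1 : γ (W.act γ 1 (x * v)) = γ (x * v) := by
      have := I2 W γ hab h2 (x * v) 1
      rwa [mul_one, mul_one] at this
    have e2 : γ (W.act γ 1 v * x) = γ (v * x) := I2 W γ hab h2 v x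
    rw [← e1, hstar v, hcomm _ (N1 W γ hab v), e2]
  have e5 : γ ∘ₗ LinearMap.mulLeft k x = γ ∘ₗ LinearMap.mulRight k x := by
    ext v
    simp only [LinearMap.coe_comp, Function.comp_apply, LinearMap.mulLeft_apply,
      LinearMap.mulRight_apply]
    exact kc v
  have e1 : W.comul (x * h) = ((1:H) ⊗ₜ[k] x) * W.comul h := by
    rw [W.comul_mul, comul_mem W hx, mul_assoc, ← W.comul_mul, one_mul]
  have e2 : W.comul (h * x) = W.comul h * ((1:H) ⊗ₜ[k] x) := by
    rw [W.comul_mul, comul_mem W hx, L5' W hx, ← mul_assoc, ← W.comul_mul, mul_one]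
  have ml : ∀ t : H ⊗[k] H, (TensorProduct.map LinearMap.id γ) (((1:H) ⊗ₜ[k] x) * t) =
      (TensorProduct.map LinearMap.id (γ ∘ₗ LinearMap.mulLeft k x)) t := by
    intro t
    induction t with
    | zero => simp
    | tmul u v =>
      simp [Algebra.TensorProduct.tmul_mul_tmul]
    | add t1 t2 h1 h2 => simp only [mul_add, map_add, h1, h2]
  have mr : ∀ t : H ⊗[k] H, (TensorProduct.map LinearMap.id γ) (t * ((1:H) ⊗ₜ[k] x)) =
      (TensorProduct.map LinearMap.id (γ ∘ₗ LinearMap.mulRight k x)) t := by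
    intro t
    induction t with
    | zero => simp
    | tmul u v =>
      simp [Algebra.TensorProduct.tmul_mul_tmul]
    | add t1 t2 h1 h2 => simp only [add_mul, map_add, h1, h2]
  apply Rinj W γ β hβγ
  rw [e1, e2, ml, mr, e5]

end Aux8
/-- For γ ∈ G(H*), T ↦ T(1) is an algebra isomorphism from the
H-module endomorphisms of H_s^γ onto Z(H) ∩ H_s. -/
theorem weakHopf_endomorphisms_of_Hs {k H : Type*} [Field k] [Ring H] [Algebra k H]
    [FiniteDimensional k H] (W : WeakHopf k H) (γ : H →ₗ[k] k)
    (hγ : W.IsGroupLikeDual γ) (hone : (1 : H) ∈ LinearMap.range W.εsL) :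
    Set.InjOn (fun T : LinearMap.range W.εsL →ₗ[k] LinearMap.range W.εsL =>
        ((T ⟨1, hone⟩ : LinearMap.range W.εsL) : H))
      {T | ∀ (y z : LinearMap.range W.εsL) (h : H),
        W.act γ (y : H) h = (z : H) → W.act γ ((T y : LinearMap.range W.εsL) : H) h = ((T z : LinearMap.range W.εsL) : H)} ∧
    (fun T : LinearMap.range W.εsL →ₗ[k] LinearMap.range W.εsL =>
        ((T ⟨1, hone⟩ : LinearMap.range W.εsL) : H)) ''
      {T | ∀ (y z : LinearMap.range W.εsL) (h : H),
        W.act γ (y : H) h = (z : H) → W.act γ ((T y : LinearMap.range W.εsL) : H) h = ((T z : LinearMap.range W.εsL) : H)} =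
      {x : H | x ∈ Set.center H ∧ x ∈ LinearMap.range W.εsL} ∧
    (∀ T T' : LinearMap.range W.εsL →ₗ[k] LinearMap.range W.εsL,
      (∀ (y z : LinearMap.range W.εsL) (h : H),
        W.act γ (y : H) h = (z : H) → W.act γ ((T y : LinearMap.range W.εsL) : H) h = ((T z : LinearMap.range W.εsL) : H)) →
      (∀ (y z : LinearMap.range W.εsL) (h : H),
        W.act γ (y : H) h = (z : H) → W.act γ ((T' y : LinearMap.range W.εsL) : H) h = ((T' z : LinearMap.range W.εsL) : H)) →
      (((T ∘ₗ T') ⟨1, hone⟩ : LinearMap.range W.εsL) : H) =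
        ((T ⟨1, hone⟩ : LinearMap.range W.εsL) : H) *
          ((T' ⟨1, hone⟩ : LinearMap.range W.εsL) : H)) := by
  classical
  obtain ⟨⟨β, hγβ, hβγ⟩, h2, h3⟩ := hγ
  obtain ⟨n, a, b, hab⟩ := exists_rep (W.comul 1)
  have hN2 : ∀ {y : H}, y ∈ LinearMap.range W.εsL → W.act γ 1 y = y :=
    fun hy => N2 W γ β hβγ h2 hy
  have hN1 : ∀ w : H, W.act γ 1 w ∈ LinearMap.range W.εsL := fun w => N1 W γ hab w
  have hI5 : ∀ {y : H}, y ∈ LinearMap.range W.εsL →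
      ∀ w, W.act γ 1 (w * y) = W.act γ 1 w * y := fun hy w => I5 W γ β hβγ h2 hy w
  have hact : ∀ (y h : H), W.act γ y h = W.act γ 1 (y * h) := act_one W γ
  -- (a) any module endomorphism is left multiplication by T(1)
  have key : ∀ T : LinearMap.range W.εsL →ₗ[k] LinearMap.range W.εsL,
      (∀ (y z : LinearMap.range W.εsL) (h : H),
        W.act γ (y : H) h = (z : H) →
          W.act γ ((T y : LinearMap.range W.εsL) : H) h = ((T z : LinearMap.range W.εsL) : H)) →
      ∀ (y : H) (hy : y ∈ LinearMap.range W.εsL),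
        ((T ⟨y, hy⟩ : LinearMap.range W.εsL) : H) =
          ((T ⟨1, hone⟩ : LinearMap.range W.εsL) : H) * y := by
    intro T hT y hy
    have h1 := hT ⟨1, hone⟩ ⟨y, hy⟩ y (by simpa using hN2 hy)
    have hx : ((T ⟨1, hone⟩ : LinearMap.range W.εsL) : H) ∈ LinearMap.range W.εsL :=
      (T ⟨1, hone⟩).2
    rw [hact _ y, hN2 (N3 W hx hy)] at h1
    exact h1.symm
  -- (c)
  have hstar : ∀ T : LinearMap.range W.εsL →ₗ[k] LinearMap.range W.εsL,
      (∀ (y z : LinearMap.range W.εsL) (h : H),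
        W.act γ (y : H) h = (z : H) →
          W.act γ ((T y : LinearMap.range W.εsL) : H) h = ((T z : LinearMap.range W.εsL) : H)) →
      ∀ w : H, W.act γ 1 (((T ⟨1, hone⟩ : LinearMap.range W.εsL) : H) * w) =
        ((T ⟨1, hone⟩ : LinearMap.range W.εsL) : H) * W.act γ 1 w := by
    intro T hT w
    have h1 := hT ⟨1, hone⟩ ⟨W.act γ 1 w, hN1 w⟩ w (by simp)
    rw [key T hT _ (hN1 w)] at h1
    rw [hact] at h1
    exact h1
  -- (b) T(1) commutes with H_s
  have hcomm : ∀ T : LinearMap.range W.εsL →ₗ[k] LinearMap.range W.εsL,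
      (∀ (y z : LinearMap.range W.εsL) (h : H),
        W.act γ (y : H) h = (z : H) →
          W.act γ ((T y : LinearMap.range W.εsL) : H) h = ((T z : LinearMap.range W.εsL) : H)) →
      ∀ y ∈ LinearMap.range W.εsL,
        ((T ⟨1, hone⟩ : LinearMap.range W.εsL) : H) * y =
          y * ((T ⟨1, hone⟩ : LinearMap.range W.εsL) : H) := by
    intro T hT y hy
    have hx : ((T ⟨1, hone⟩ : LinearMap.range W.εsL) : H) ∈ LinearMap.range W.εsL :=
      (T ⟨1, hone⟩).2
    obtain ⟨t, htm, hte⟩ := lamSurj W γ h3 y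
    have h1 := hT ⟨1, hone⟩ ⟨y, hy⟩ t (by simpa using hte.trans (hN2 hy))
    have hL : W.act γ ((T ⟨1, hone⟩ : LinearMap.range W.εsL) : H) t =
        y * ((T ⟨1, hone⟩ : LinearMap.range W.εsL) : H) := by
      rw [hact, L5mem W hx htm, hI5 hx t, hte, hN2 hy]
    rw [hL, key T hT y hy] at h1
    exact h1.symm
  -- (d) centrality of T(1)
  have hcent : ∀ T : LinearMap.range W.εsL →ₗ[k] LinearMap.range W.εsL,
      (∀ (y z : LinearMap.range W.εsL) (h : H),
        W.act γ (y : H) h = (z : H) →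
          W.act γ ((T y : LinearMap.range W.εsL) : H) h = ((T z : LinearMap.range W.εsL) : H)) →
      ∀ h : H, ((T ⟨1, hone⟩ : LinearMap.range W.εsL) : H) * h =
        h * ((T ⟨1, hone⟩ : LinearMap.range W.εsL) : H) := by
    intro T hT h
    exact central W γ β hβγ h2 (T ⟨1, hone⟩).2 (hcomm T hT) (hstar T hT) h
  refine ⟨?_, ?_, ?_⟩
  · -- injectivity
    intro T hT T' hT' heq
    simp only at heq
    ext y
    rcases y with ⟨y, hy⟩
    have := (key T hT y hy).trans (heq ▸ (key T' hT' y hy)).symm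
    exact this
  · -- image
    apply Set.eq_of_subset_of_subset
    · rintro _ ⟨T, hT, rfl⟩
      exact ⟨Semigroup.mem_center_iff.mpr fun g => (hcent T hT g).symm, (T ⟨1, hone⟩).2⟩
    · rintro x ⟨hxc, hxs⟩
      have hc : ∀ g : H, g * x = x * g := Semigroup.mem_center_iff.mp hxc
      have hres : ∀ y ∈ LinearMap.range W.εsL,
          LinearMap.mulLeft k x y ∈ LinearMap.range W.εsL := fun y hy => N3 W hxs hy
      refine ⟨(LinearMap.mulLeft k x).restrict hres, ?_, by
        simp [LinearMap.restrict_apply]⟩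
      intro y z h hyz
      simp only [LinearMap.restrict_apply, LinearMap.mulLeft_apply]
      rw [hact, mul_assoc, ← hc (↑y * h), hI5 hxs, ← hact, hyz, hc]
  · -- multiplicativity
    intro T T' hT hT'
    have e := key T hT ((T' ⟨1, hone⟩ : LinearMap.range W.εsL) : H) (T' ⟨1, hone⟩).2
    simp only [LinearMap.comp_apply]
    rw [← e]
end

section
/- Let H be a finite-dimensional weak Hopf algebra with non-degenerate left integral ℓ. Then ℓ is separating for right multiplication by H_s: for y ∈ H_s, ℓy = 0 implies y = 0; moreover the map y ↦ ℓy is a linear isomorphism from H_s onto the space of left integrals in H. -/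
open TensorProduct

/-!
For `y ∈ H_s` the weak unit axiom gives `Δ(y) = Δ(1)(1 ⊗ y)`, hence `Δ(ℓy) = Δ(ℓ)(1 ⊗ y)`, i.e.
`φ ⇀ ℓy = (φ(· y)) ⇀ ℓ`. If `ℓy = 0`, non-degeneracy forces `φ(· y) = 0` for every `φ ∈ H*`,
so `y = 0`. As `ℓy` is again a left integral, `y ↦ ℓy` is an injective linear map from `H_s`
into the left integrals, which have the same dimension, so it is onto.
-/

namespace WeakHopf

variable {k H : Type*} [Field k] [Ring H] [Algebra k H] (W : WeakHopf k H)

theorem εsL_apply_s18 (x : H) :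
    W.εsL x = TensorProduct.rid k H
      (TensorProduct.map LinearMap.id (W.counit ∘ₗ LinearMap.mulLeft k x) (W.comul 1)) := by
  have key : ∀ t : H ⊗[k] H,
      TensorProduct.rid k H (TensorProduct.map LinearMap.id
          (W.counit ∘ₗ LinearMap.mul' k H ∘ₗ (TensorProduct.comm k H H).toLinearMap)
          (TensorProduct.assoc k H H H (t ⊗ₜ[k] x))) =
        TensorProduct.rid k H
          (TensorProduct.map LinearMap.id (W.counit ∘ₗ LinearMap.mulLeft k x) t) := by
    intro t
    induction t using TensorProduct.induction_on with
    | zero => simp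
    | tmul a b => simp [LinearMap.mul'_apply]
    | add u v hu hv => simp only [add_tmul, map_add, hu, hv]
  simpa [εsL] using key (W.comul 1)

theorem rid_map_mulRight (φ : H →ₗ[k] k) (y : H) (t : H ⊗[k] H) :
    TensorProduct.rid k H (TensorProduct.map LinearMap.id (φ ∘ₗ LinearMap.mulRight k y) t) =
      TensorProduct.rid k H (TensorProduct.map LinearMap.id φ (t * ((1 : H) ⊗ₜ[k] y))) := by
  induction t using TensorProduct.induction_on with
  | zero => simp
  | tmul a b => simp
  | add u v hu hv => simp only [map_add, add_mul, hu, hv]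

theorem comul_εsL (x : H) :
    W.comul (W.εsL x) = W.comul 1 * ((1 : H) ⊗ₜ[k] W.εsL x) := by
  -- apply `ε(x ·)` to the third leg of `(Δ ⊗ id)Δ(1) = (Δ(1) ⊗ 1)(1 ⊗ Δ(1))`
  set f : H →ₗ[k] k := W.counit ∘ₗ LinearMap.mulLeft k x
  set Φ : (H ⊗[k] H) ⊗[k] H →ₗ[k] H ⊗[k] H :=
    (TensorProduct.rid k (H ⊗[k] H)).toLinearMap ∘ₗ TensorProduct.map LinearMap.id f
  have Φ_map_comul : ∀ t : H ⊗[k] H, Φ (TensorProduct.map W.comul LinearMap.id t) =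
      W.comul (TensorProduct.rid k H (TensorProduct.map LinearMap.id f t)) := by
    intro t
    induction t using TensorProduct.induction_on with
    | zero => simp
    | tmul a b => simp [Φ]
    | add u v hu hv => simp only [map_add, hu, hv]
  have Φ_mul_one_tmul : ∀ t : H ⊗[k] H,
      Φ ((W.comul 1 ⊗ₜ[k] (1 : H)) * (TensorProduct.assoc k H H H).symm ((1 : H) ⊗ₜ[k] t)) =
        W.comul 1 * ((1 : H) ⊗ₜ[k] TensorProduct.rid k H (TensorProduct.map LinearMap.id f t)) := by
    intro t
    induction t using TensorProduct.induction_on with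
    | zero => simp
    | tmul a b => simp [Φ, TensorProduct.tmul_smul]
    | add u v hu hv => simp only [tmul_add, map_add, mul_add, hu, hv]
  rw [εsL_apply_s18, ← Φ_map_comul, weak_unit_left, Φ_mul_one_tmul]

theorem comul_mul_of_mem_range_εsL (h : H) {y : H} (hy : y ∈ LinearMap.range W.εsL) :
    W.comul (h * y) = W.comul h * ((1 : H) ⊗ₜ[k] y) := by
  obtain ⟨x, rfl⟩ := hy
  rw [W.comul_mul, comul_εsL, ← mul_assoc, ← W.comul_mul, mul_one]

theorem mul_mem_leftIntegrals {ℓ : H} (hℓ : ℓ ∈ W.leftIntegrals) (y : H) :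
    ℓ * y ∈ W.leftIntegrals := fun h => by
  rw [← mul_assoc, hℓ h, mul_assoc]

theorem eq_zero_of_mul_eq_zero_of_nondegenerate {ℓ : H}
    (hnd : Function.Injective (fun φ : H →ₗ[k] k =>
      TensorProduct.rid k H (TensorProduct.map LinearMap.id φ (W.comul ℓ))))
    {y : H} (hy : y ∈ LinearMap.range W.εsL) (hℓy : ℓ * y = 0) : y = 0 := by
  have mulRight_eq_zero : ∀ φ : H →ₗ[k] k, φ ∘ₗ LinearMap.mulRight k y = 0 := fun φ =>
    hnd <| by
      simp only [rid_map_mulRight, ← W.comul_mul_of_mem_range_εsL ℓ hy, hℓy, map_zero,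
        map_zero_right, LinearMap.zero_apply]
  refine (Module.forall_dual_apply_eq_zero_iff k y).mp fun φ => ?_
  simpa using LinearMap.congr_fun (mulRight_eq_zero φ) 1

end WeakHopf

/-- A non-degenerate left integral ℓ is separating for right
multiplication by H_s, and y ↦ ℓy is a linear isomorphism from H_s onto the
space of left integrals. -/
theorem weakHopf_integral_separating {k H : Type*} [Field k] [Ring H] [Algebra k H]
    [FiniteDimensional k H] (W : WeakHopf k H) (ℓ : H)
    (hl : ℓ ∈ W.leftIntegrals)
    (hnd : Function.Bijective (fun φ : H →ₗ[k] k =>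
      (TensorProduct.rid k H) ((TensorProduct.map LinearMap.id φ) (W.comul ℓ))))
    (hdim : Module.finrank k W.leftIntegrals =
      Module.finrank k (LinearMap.range W.εsL)) :
    (∀ y ∈ LinearMap.range W.εsL, ℓ * y = 0 → y = 0) ∧
    (∀ y ∈ LinearMap.range W.εsL, ℓ * y ∈ W.leftIntegrals) ∧
    (∀ x ∈ W.leftIntegrals, ∃ y ∈ LinearMap.range W.εsL, ℓ * y = x) := by
  have separating : ∀ y ∈ LinearMap.range W.εsL, ℓ * y = 0 → y = 0 := fun _ hy =>
    W.eq_zero_of_mul_eq_zero_of_nondegenerate hnd.injective hy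
  let mulIntegral : LinearMap.range W.εsL →ₗ[k] W.leftIntegrals :=
    ((LinearMap.mulLeft k ℓ).domRestrict _).codRestrict _ fun y => W.mul_mem_leftIntegrals hl y
  have injective : Function.Injective mulIntegral := by
    refine (injective_iff_map_eq_zero mulIntegral).mpr fun y hy => Subtype.ext ?_
    exact separating y y.2 (congrArg Subtype.val hy)
  have surjective :=
    (LinearMap.injective_iff_surjective_of_finrank_eq_finrank hdim.symm).mp injective
  refine ⟨separating, fun y _ => W.mul_mem_leftIntegrals hl y, fun x hx => ?_⟩
  obtain ⟨y, hy⟩ := surjective ⟨x, hx⟩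
  exact ⟨y, y.2, congrArg Subtype.val hy⟩
end
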